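/- arXiv:2212.10208 — 2 statements merged into one kernel-verified Lean document; each statement's English description precedes it below -/
import Mathlib

section
/- Let L be a finite lattice containing no crown of order l ≥ 3 as a suborder. Then every interval relation θ on L is order-preserving, i.e., ≤_θ is a partial order on L/θ. -/
open Classical

variable {L : Type*}

/-- The interval relation `θ_{S₁,…,Sₖ}` for the pairwise disjoint intervals
`Sᵢ = [u i, v i]`. -/
def mrel [Preorder L] {k : ℕ} (u v : Fin k → L) (x y : L) : Prop :=
  x = y ∨ ∃ i, x ∈ Set.Icc (u i) (v i) ∧ y ∈ Set.Icc (u i) (v i)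

/-- `θ_{S₁,…,Sₖ}` as a setoid (the intervals must be pairwise disjoint). -/
def mrelSetoid [Preorder L] {k : ℕ} (u v : Fin k → L)
    (hdisj : Pairwise fun i j => Disjoint (Set.Icc (u i) (v i)) (Set.Icc (u j) (v j))) :
    Setoid L where
  r := mrel u v
  iseqv := by
    constructor
    · intro x; exact Or.inl rfl
    · rintro x y (rfl | ⟨i, hx, hy⟩)
      · exact Or.inl rfl
      · exact Or.inr ⟨i, hy, hx⟩
    · rintro x y z (rfl | ⟨i, hx, hy⟩) h
      · exact h
      · rcases h with rfl | ⟨j, hy', hz⟩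
        · exact Or.inr ⟨i, hx, hy⟩
        · rcases eq_or_ne i j with rfl | hij
          · exact Or.inr ⟨i, hx, hz⟩
          · exact ((Set.disjoint_left.mp (hdisj hij) hy) hy').elim

/-- `x_θ`, the least element of the class of `x`. -/
noncomputable def mlow [Preorder L] {k : ℕ} (u v : Fin k → L) (x : L) : L :=
  if h : ∃ i, x ∈ Set.Icc (u i) (v i) then u (Classical.choose h) else x

/-- `x^θ`, the greatest element of the class of `x`. -/
noncomputable def mhigh [Preorder L] {k : ℕ} (u v : Fin k → L) (x : L) : L :=
  if h : ∃ i, x ∈ Set.Icc (u i) (v i) then v (Classical.choose h) else x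

/-- `Sᵢ↓`, the elements outside `Sᵢ` strictly below some element of `Sᵢ`. -/
def mSdown [Preorder L] {k : ℕ} (u v : Fin k → L) (i : Fin k) : Set L :=
  {z | z ∉ Set.Icc (u i) (v i) ∧ ∃ s ∈ Set.Icc (u i) (v i), z < s}

/-- `Sᵢ↑`, the elements outside `Sᵢ` strictly above some element of `Sᵢ`. -/
def mSup [Preorder L] {k : ℕ} (u v : Fin k → L) (i : Fin k) : Set L :=
  {z | z ∉ Set.Icc (u i) (v i) ∧ ∃ s ∈ Set.Icc (u i) (v i), s < z}

/-- The relation `≤_θ` on representatives: `x_θ ≤ y^θ` or a chain of intervals connects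
the class of `x` to the class of `y` through the intervals' strict down- and up-sets. -/
def mle [Preorder L] {k : ℕ} (u v : Fin k → L) (x y : L) : Prop :=
  mlow u v x ≤ mhigh u v y ∨
    ∃ (n : ℕ) (c : Fin (n + 1) → Fin k),
      mlow u v x ∈ mSdown u v (c 0) ∧
      (∀ j : Fin n, u (c j.castSucc) ∈ mSdown u v (c j.succ)) ∧
      mhigh u v y ∈ mSup u v (c (Fin.last n))

/-- The induced relation `≤_θ` on the factor set `L/θ`. -/
def mLeQ [Preorder L] {k : ℕ} (u v : Fin k → L)
    (hdisj : Pairwise fun i j => Disjoint (Set.Icc (u i) (v i)) (Set.Icc (u j) (v j)))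
    (a b : Quotient (mrelSetoid u v hdisj)) : Prop :=
  ∃ x y : L, a = Quotient.mk (mrelSetoid u v hdisj) x ∧
    b = Quotient.mk (mrelSetoid u v hdisj) y ∧ mle u v x y


section AuxNoCycle

variable {L : Type*} [Lattice L] {k : ℕ} {u v : Fin k → L}

/-- Auxiliary relation between intervals: `i ≠ j` and `u i ≤ v j`. -/
def crel (u v : Fin k → L) (i j : Fin k) : Prop := i ≠ j ∧ u i ≤ v j

lemma no2 (hu : ∀ i, u i ≤ v i)
    (hdisj : Pairwise fun i j => Disjoint (Set.Icc (u i) (v i)) (Set.Icc (u j) (v j)))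
    {i j : Fin k} (hij : crel u v i j) (hji : crel u v j i) : False := by
  have h1 : u i ⊔ u j ∈ Set.Icc (u i) (v i) := ⟨le_sup_left, sup_le (hu i) hji.2⟩
  have h2 : u i ⊔ u j ∈ Set.Icc (u j) (v j) := ⟨le_sup_right, sup_le hij.2 (hu j)⟩
  exact Set.disjoint_left.mp (hdisj hij.1) h1 h2

/-- A cyclic `crel`-sequence of intervals of period `q`. -/
def hasCyc (u v : Fin k → L) (q : ℕ) : Prop :=
  ∃ e : ℕ → Fin k, (∀ n, e (n + q) = e n) ∧ ∀ n, crel u v (e n) (e (n + 1))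

lemma per_mod {α : Type*} {e : ℕ → α} {q : ℕ}
    (hper : ∀ n, e (n + q) = e n) {a b : ℕ} (hab : a % q = b % q) : e a = e b := by
  have key : ∀ t n, e (n + q * t) = e n := by
    intro t
    induction t with
    | zero => intro n; simp
    | succ t ih => intro n; rw [Nat.mul_succ, ← Nat.add_assoc, hper, ih]
  have ha : e a = e (a % q) := by
    conv_lhs => rw [← Nat.mod_add_div a q]
    exact key (a / q) (a % q)
  have hb : e b = e (b % q) := by
    conv_lhs => rw [← Nat.mod_add_div b q]
    exact key (b / q) (b % q)
  rw [ha, hb, hab]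

lemma succ_mod (N j : ℕ) (hN : 0 < N) :
    (j + 1) % N = if j % N + 1 = N then 0 else j % N + 1 := by
  rcases Nat.lt_or_ge 1 N with h2 | h2
  · by_cases h : j % N + 1 = N
    · rw [if_pos h, Nat.add_mod, Nat.mod_eq_of_lt h2, h, Nat.mod_self]
    · rw [if_neg h, Nat.add_mod, Nat.mod_eq_of_lt h2]
      have hlt : j % N < N := Nat.mod_lt _ hN
      exact Nat.mod_eq_of_lt (by omega)
  · have hN1 : N = 1 := by omega
    subst hN1
    rw [Nat.mod_one, Nat.mod_one]
    simp

lemma no_cycle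
    (hnc : ¬ ∃ (l : ℕ) (x y : Fin (l + 3) → L),
        (∀ i j, x i ≤ y j ↔ (j = i ∨ j = i + 1)) ∧
        (∀ i j, i ≠ j → ¬ x i ≤ x j) ∧
        (∀ i j, i ≠ j → ¬ y i ≤ y j) ∧
        (∀ i j, ¬ y i ≤ x j))
    (hu : ∀ i, u i ≤ v i)
    (hdisj : Pairwise fun i j => Disjoint (Set.Icc (u i) (v i)) (Set.Icc (u j) (v j))) :
    ¬ ∃ q, 2 ≤ q ∧ hasCyc u v q := by
  intro h
  obtain ⟨q, hq, hqmin⟩ : ∃ q, (2 ≤ q ∧ hasCyc u v q) ∧ ∀ q' < q, ¬ (2 ≤ q' ∧ hasCyc u v q') :=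
    ⟨Nat.find h, Nat.find_spec h, fun q' hq' => Nat.find_min h hq'⟩
  obtain ⟨hq2, e, hper, hlink⟩ := hq
  have hq0 : 0 < q := by omega
  have he : ∀ a b : ℕ, a % q = b % q → e a = e b := fun a b => per_mod hper
  -- splicing a shorter cycle out of a closed segment
  have seg : ∀ b M : ℕ, 2 ≤ M → M < q → crel u v (e (b + (M - 1))) (e b) → False := by
    intro b M hM hMq hlast
    refine hqmin M hMq ⟨hM, fun j => e (b + j % M), fun j => by show e (b + (j + M) % M) = e (b + j % M); rw [Nat.add_mod_right],
      fun j => ?_⟩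
    show crel u v (e (b + j % M)) (e (b + (j + 1) % M))
    have hM0 : 0 < M := by omega
    rw [succ_mod M j hM0]
    by_cases hcase : j % M + 1 = M
    · rw [if_pos hcase]
      rw [show j % M = M - 1 from by omega]
      simpa using hlast
    · rw [if_neg hcase]
      have h9 := hlink (b + j % M)
      rwa [show b + j % M + 1 = b + (j % M + 1) from by omega] at h9
  have cor1 : ∀ a b : ℕ, crel u v (e a) (e b) → b % q = (a + 1) % q := by
    intro a b hR
    set m := (a % q + q - b % q) % q with hm
    have hmq : m < q := Nat.mod_lt _ hq0
    have hba : (b + m) % q = a % q := by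
      have h3 : b % q < q := Nat.mod_lt _ hq0
      have h1 : b + (a % q + q - b % q) = a % q + q * (b / q + 1) := by
        have h2 := Nat.mod_add_div b q
        have h4 : q * (b / q + 1) = q * (b / q) + q := by ring
        omega
      have h2 : (b + m) % q = (b + (a % q + q - b % q)) % q := by
        rw [hm, Nat.add_mod, Nat.mod_mod_of_dvd _ dvd_rfl, ← Nat.add_mod]
      rw [h2, h1, Nat.add_mul_mod_self_left, Nat.mod_mod_of_dvd _ dvd_rfl]
    have hm0 : m ≠ 0 := by
      intro h0
      rw [h0, Nat.add_zero] at hba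
      exact hR.1 (he a b hba.symm)
    by_cases hlt : m + 1 < q
    · refine absurd (seg b (m + 1) (by omega) hlt ?_) (fun h => h)
      have h5 : e (b + (m + 1 - 1)) = e a := by
        rw [show m + 1 - 1 = m from rfl]
        exact he _ _ hba
      rw [h5]; exact hR
    · have h6 : Nat.ModEq q (b + m + 1) (a + 1) := Nat.ModEq.add_right 1 hba
      rw [show b + m + 1 = b + q from by omega] at h6
      have h7 : (b + q) % q = (a + 1) % q := h6
      rwa [Nat.add_mod_right] at h7
  have cor2 : ∀ a b : ℕ, e a = e b → a % q = b % q := by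
    intro a b hab
    by_contra hne
    set m := (a % q + q - b % q) % q with hm
    have hmq : m < q := Nat.mod_lt _ hq0
    have hba : (b + m) % q = a % q := by
      have h3 : b % q < q := Nat.mod_lt _ hq0
      have h1 : b + (a % q + q - b % q) = a % q + q * (b / q + 1) := by
        have h2 := Nat.mod_add_div b q
        have h4 : q * (b / q + 1) = q * (b / q) + q := by ring
        omega
      have h2 : (b + m) % q = (b + (a % q + q - b % q)) % q := by
        rw [hm, Nat.add_mod, Nat.mod_mod_of_dvd _ dvd_rfl, ← Nat.add_mod]
      rw [h2, h1, Nat.add_mul_mod_self_left, Nat.mod_mod_of_dvd _ dvd_rfl]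
    have hm0 : m ≠ 0 := by
      intro h0
      rw [h0, Nat.add_zero] at hba
      exact hne hba.symm
    have hm1 : m ≠ 1 := by
      intro h1
      rw [h1] at hba
      exact (hlink b).1 (((he (b + 1) a hba).trans hab).symm)
    refine seg b m (by omega) hmq ?_
    have h8 := hlink (b + (m - 1))
    rw [show b + (m - 1) + 1 = b + m from by omega] at h8
    rwa [(he (b + m) a hba).trans hab] at h8
  have hq3 : 3 ≤ q := by
    by_contra h3
    have hq2' : q = 2 := by omega
    subst hq2'
    have ha := hlink 0
    have hb := hlink 1
    have hc : e 2 = e 0 := hper 0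
    rw [hc] at hb
    exact no2 hu hdisj ha hb
  clear hqmin
  obtain ⟨l, rfl⟩ : ∃ l, q = l + 3 := ⟨q - 3, by omega⟩
  apply hnc
  have hmodlt : ∀ i : Fin (l + 3), i.val % (l + 3) = i.val := fun i => Nat.mod_eq_of_lt i.isLt
  have hfin1 : ∀ i : Fin (l + 3), (i + 1 : Fin (l + 3)).val = (i.val + 1) % (l + 3) := by
    intro i; simp [Fin.add_def]
  have key0 : ∀ j : Fin (l + 3), u (e (j.val + l + 2)) ⊔ u (e j.val) ≤ v (e j.val) := by
    intro j
    refine sup_le ?_ (hu _)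
    have h1 := (hlink (j.val + l + 2)).2
    have h2 : e (j.val + l + 2 + 1) = e j.val := by
      apply he
      rw [show j.val + l + 2 + 1 = j.val + (l + 3) from by omega, Nat.add_mod_right]
    rwa [h2] at h1
  have key1 : ∀ a b : ℕ, u (e a) ≤ v (e b) →
      b % (l + 3) = a % (l + 3) ∨ b % (l + 3) = (a + 1) % (l + 3) := by
    intro a b hab
    by_cases hh : e a = e b
    · exact Or.inl (cor2 b a hh.symm)
    · exact Or.inr (cor1 a b ⟨hh, hab⟩)
  have dvd_contra : ∀ a b : ℕ, a ≤ b → a % (l + 3) = b % (l + 3) → l + 3 ≤ b - a ∨ a = b := by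
    intro a b hle hmod
    rcases Nat.eq_or_lt_of_le hle with rfl | hlt
    · exact Or.inr rfl
    · exact Or.inl (Nat.le_of_dvd (by omega) ((Nat.modEq_iff_dvd' hle).mp hmod))
  have key2 : ∀ a : ℕ, ¬ u (e a) ≤ u (e (a + 1)) := by
    intro a hle
    have h3 : u (e a) ≤ v (e (a + 2)) := hle.trans (hlink (a + 1)).2
    rcases key1 a (a + 2) h3 with hh | hh
    · rcases dvd_contra a (a + 2) (by omega) hh.symm with h' | h' <;> omega
    · rcases dvd_contra (a + 1) (a + 2) (by omega) hh.symm with h' | h' <;> omega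
  refine ⟨l, fun i => u (e i.val), fun i => u (e (i.val + l + 2)) ⊔ u (e i.val), ?_, ?_, ?_, ?_⟩
  · intro i j
    constructor
    · intro hle
      have h1 : u (e i.val) ≤ v (e j.val) := hle.trans (key0 j)
      rcases key1 i.val j.val h1 with hh | hh
      · left
        refine Fin.ext ?_
        rw [← hmodlt j, ← hmodlt i]; exact hh
      · right
        refine Fin.ext ?_
        rw [← hmodlt j, hfin1 i]; exact hh
    · rintro (rfl | rfl)
      · exact le_sup_right
      · have h2 : e ((i + 1 : Fin (l + 3)).val + l + 2) = e i.val := by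
          apply he
          rw [hfin1 i]
          rw [show (i.val + 1) % (l + 3) + l + 2 = (i.val + 1) % (l + 3) + (l + 2) from by omega]
          rw [Nat.add_mod ((i.val + 1) % (l + 3)), Nat.mod_mod_of_dvd _ dvd_rfl, ← Nat.add_mod]
          rw [show i.val + 1 + (l + 2) = i.val + (l + 3) from by omega, Nat.add_mod_right]
        show u (e i.val) ≤ u (e ((i + 1 : Fin (l + 3)).val + l + 2)) ⊔ u (e (i + 1 : Fin (l + 3)).val)
        rw [h2]
        exact le_sup_left
  · intro i j hij hle
    have hle' : u (e i.val) ≤ u (e j.val) := hle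
    have h1 : u (e i.val) ≤ v (e j.val) := hle'.trans (hu _)
    rcases key1 i.val j.val h1 with hh | hh
    · refine hij (Fin.ext ?_).symm
      rw [← hmodlt j, ← hmodlt i]; exact hh
    · have h2 : e j.val = e (i.val + 1) := he _ _ hh
      rw [h2] at hle'
      exact key2 i.val hle'
  · intro i j hij hle
    have h1 : u (e i.val) ≤ v (e j.val) := le_sup_right.trans (hle.trans (key0 j))
    have h1' : u (e (i.val + l + 2)) ≤ v (e j.val) := le_sup_left.trans (hle.trans (key0 j))
    rcases key1 i.val j.val h1 with hh | hh
    · refine hij (Fin.ext ?_).symm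
      rw [← hmodlt j, ← hmodlt i]; exact hh
    · rcases key1 (i.val + l + 2) j.val h1' with hh' | hh'
      · have h5 := dvd_contra (i.val + 1) (i.val + l + 2) (by omega) (hh.symm.trans hh')
        omega
      · have h5 := dvd_contra (i.val + 1) (i.val + l + 2 + 1) (by omega) (hh.symm.trans hh')
        omega
  · intro i j hle
    have h1 : u (e i.val) ≤ u (e j.val) := le_sup_right.trans hle
    have h2 : u (e (i.val + l + 2)) ≤ u (e j.val) := le_sup_left.trans hle
    rcases key1 i.val j.val (h1.trans (hu _)) with hh | hh
    · have h3 : e j.val = e (i.val + l + 2 + 1) := by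
        apply he
        rw [hh, show i.val + l + 2 + 1 = i.val + (l + 3) from by omega, Nat.add_mod_right]
      rw [h3] at h2
      exact key2 (i.val + l + 2) h2
    · have h3 : e j.val = e (i.val + 1) := he _ _ hh
      rw [h3] at h1
      exact key2 i.val h1

end AuxNoCycle

section AuxChains

variable {α : Type*} {P : α → α → Prop}

/-- Prepend an element to a chain. -/
def consC (a : α) (c : ℕ → α) : ℕ → α := fun r => if r = 0 then a else c (r - 1)

/-- Append an element to a chain. -/
def snocC (n : ℕ) (c : ℕ → α) (a : α) : ℕ → α := fun r => if r ≤ n then c r else a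

/-- Concatenate two chains. -/
def catC (n : ℕ) (c d : ℕ → α) : ℕ → α := fun r => if r ≤ n then c r else d (r - (n + 1))

lemma consC_zero (a : α) (c : ℕ → α) : consC a c 0 = a := rfl

lemma consC_succ (a : α) (c : ℕ → α) (r : ℕ) : consC a c (r + 1) = c r := by simp [consC]

lemma consC_chain {a : α} {c : ℕ → α} {n : ℕ} (hc : ∀ j < n, P (c j) (c (j + 1)))
    (h : P a (c 0)) : ∀ j < n + 1, P (consC a c j) (consC a c (j + 1)) := by
  intro j hj
  cases j with
  | zero => rw [consC_zero, consC_succ]; exact h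
  | succ j => rw [consC_succ, consC_succ]; exact hc j (by omega)

lemma snocC_le {n r : ℕ} (c : ℕ → α) (a : α) (h : r ≤ n) : snocC n c a r = c r := if_pos h

lemma snocC_gt {n r : ℕ} (c : ℕ → α) (a : α) (h : n < r) : snocC n c a r = a :=
  if_neg (by omega)

lemma snocC_chain {n : ℕ} {c : ℕ → α} {a : α} (hc : ∀ j < n, P (c j) (c (j + 1)))
    (h : P (c n) a) : ∀ j < n + 1, P (snocC n c a j) (snocC n c a (j + 1)) := by
  intro j hj
  rcases Nat.lt_or_ge j n with h1 | h1
  · rw [snocC_le _ _ (by omega), snocC_le _ _ (by omega)]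
    exact hc j h1
  · have hjn : j = n := by omega
    subst hjn
    rw [snocC_le _ _ le_rfl, snocC_gt _ _ (by omega)]
    exact h

lemma catC_le {n r : ℕ} (c d : ℕ → α) (h : r ≤ n) : catC n c d r = c r := if_pos h

lemma catC_gt {n r : ℕ} (c d : ℕ → α) (h : n < r) : catC n c d r = d (r - (n + 1)) :=
  if_neg (by omega)

lemma catC_chain {n m : ℕ} {c d : ℕ → α} (hc : ∀ j < n, P (c j) (c (j + 1)))
    (hd : ∀ j < m, P (d j) (d (j + 1))) (h : P (c n) (d 0)) :
    ∀ j < n + m + 1, P (catC n c d j) (catC n c d (j + 1)) := by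
  intro j hj
  rcases Nat.lt_or_ge j n with h1 | h1
  · rw [catC_le _ _ (by omega), catC_le _ _ (by omega)]
    exact hc j h1
  rcases Nat.eq_or_lt_of_le h1 with h2 | h2
  · rw [catC_le _ _ (by omega), catC_gt _ _ (by omega),
      show j + 1 - (n + 1) = 0 from by omega, ← h2]
    exact h
  · rw [catC_gt _ _ (by omega), catC_gt _ _ (by omega),
      show j + 1 - (n + 1) = j - (n + 1) + 1 from by omega]
    exact hd (j - (n + 1)) (by omega)

end AuxChains

section AuxIcc

variable {L : Type*} [Lattice L] {k : ℕ} {u v : Fin k → L}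

lemma mSdown_def {z : L} {i : Fin k} :
    z ∈ mSdown u v i ↔ z ∉ Set.Icc (u i) (v i) ∧ ∃ s ∈ Set.Icc (u i) (v i), z < s := Iff.rfl

lemma mSup_def {z : L} {i : Fin k} :
    z ∈ mSup u v i ↔ z ∉ Set.Icc (u i) (v i) ∧ ∃ s ∈ Set.Icc (u i) (v i), s < z := Iff.rfl

lemma mem_S_low (hu : ∀ i, u i ≤ v i) (i : Fin k) : u i ∈ Set.Icc (u i) (v i) := ⟨le_rfl, hu i⟩

lemma mem_S_high (hu : ∀ i, u i ≤ v i) (i : Fin k) : v i ∈ Set.Icc (u i) (v i) := ⟨hu i, le_rfl⟩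

lemma mlow_mem (hdisj : Pairwise fun i j => Disjoint (Set.Icc (u i) (v i)) (Set.Icc (u j) (v j)))
    {x : L} {i : Fin k} (h : x ∈ Set.Icc (u i) (v i)) :
    mlow u v x = u i ∧ mhigh u v x = v i := by
  have hex : ∃ j, x ∈ Set.Icc (u j) (v j) := ⟨i, h⟩
  have hch := Classical.choose_spec hex
  have hEq : Classical.choose hex = i := by
    by_contra hne
    exact Set.disjoint_left.mp (hdisj hne) hch h
  constructor
  · rw [mlow, dif_pos hex, hEq]
  · rw [mhigh, dif_pos hex, hEq]

lemma mlow_free {x : L} (h : ∀ i : Fin k, x ∉ Set.Icc (u i) (v i)) :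
    mlow u v x = x ∧ mhigh u v x = x := by
  have hex : ¬ ∃ j, x ∈ Set.Icc (u j) (v j) := not_exists.mpr h
  constructor
  · rw [mlow, dif_neg hex]
  · rw [mhigh, dif_neg hex]

lemma mrel_lowhigh (hdisj : Pairwise fun i j => Disjoint (Set.Icc (u i) (v i)) (Set.Icc (u j) (v j)))
    {x y : L} (h : mrel u v x y) :
    mlow u v x = mlow u v y ∧ mhigh u v x = mhigh u v y := by
  rcases h with rfl | ⟨i, hx, hy⟩
  · exact ⟨rfl, rfl⟩
  · have h1 := mlow_mem hdisj hx
    have h2 := mlow_mem hdisj hy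
    exact ⟨h1.1.trans h2.1.symm, h1.2.trans h2.2.symm⟩

lemma G1 {w1 w2 : L} {i j : Fin k} (h1 : w1 ∈ mSup u v i) (h2 : w2 ∈ mSdown u v j)
    (hle : w1 ≤ w2) : crel u v i j := by
  obtain ⟨hn1, s, hs, hsw⟩ := mSup_def.mp h1
  obtain ⟨hn2, t, ht, hwt⟩ := mSdown_def.mp h2
  constructor
  · rintro rfl
    exact hn2 ⟨hs.1.trans (hsw.le.trans hle), hwt.le.trans ht.2⟩
  · exact hs.1.trans (hsw.le.trans (hle.trans (hwt.le.trans ht.2)))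

lemma G5 {w1 w2 : L} {i a : Fin k} (h1 : w1 ∈ mSup u v i)
    (h2 : w2 ∈ Set.Icc (u a) (v a)) (hle : w1 ≤ w2) : crel u v i a := by
  obtain ⟨hn1, s, hs, hsw⟩ := mSup_def.mp h1
  constructor
  · rintro rfl
    exact hn1 ⟨hs.1.trans hsw.le, hle.trans h2.2⟩
  · exact hs.1.trans (hsw.le.trans (hle.trans h2.2))

lemma G6 {w1 w2 : L} {a j : Fin k} (h1 : w1 ∈ Set.Icc (u a) (v a))
    (h2 : w2 ∈ mSdown u v j) (hle : w1 ≤ w2) : crel u v a j := by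
  obtain ⟨hn2, t, ht, hwt⟩ := mSdown_def.mp h2
  constructor
  · rintro rfl
    exact hn2 ⟨h1.1.trans hle, hwt.le.trans ht.2⟩
  · exact h1.1.trans (hle.trans (hwt.le.trans ht.2))

lemma crel_of_Dn (hu : ∀ i, u i ≤ v i) {i j : Fin k} (h : u i ∈ mSdown u v j) :
    crel u v i j := G6 (mem_S_low hu i) h le_rfl

lemma H5 (hu : ∀ i, u i ≤ v i)
    (hdisj : Pairwise fun i j => Disjoint (Set.Icc (u i) (v i)) (Set.Icc (u j) (v j)))
    {i b : Fin k} (h : v b ∈ mSup u v i) : u i ∈ mSdown u v b := by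
  obtain ⟨hn, s, hs, hsv⟩ := mSup_def.mp h
  have hib : i ≠ b := by rintro rfl; exact hn (mem_S_high hu _)
  exact mSdown_def.mpr ⟨Set.disjoint_left.mp (hdisj hib) (mem_S_low hu i), v b,
    mem_S_high hu b, lt_of_le_of_lt hs.1 hsv⟩

lemma H6 (hu : ∀ i, u i ≤ v i)
    (hdisj : Pairwise fun i j => Disjoint (Set.Icc (u i) (v i)) (Set.Icc (u j) (v j)))
    {i j : Fin k} (h : u i ∈ mSdown u v j) : v j ∈ mSup u v i := by
  obtain ⟨hn, t, ht, hut⟩ := mSdown_def.mp h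
  have hij : i ≠ j := by rintro rfl; exact hn (mem_S_low hu _)
  exact mSup_def.mpr ⟨Set.disjoint_right.mp (hdisj hij) (mem_S_high hu j), u i,
    mem_S_low hu i, lt_of_lt_of_le hut ht.2⟩

lemma H7 (hu : ∀ i, u i ≤ v i)
    (hdisj : Pairwise fun i j => Disjoint (Set.Icc (u i) (v i)) (Set.Icc (u j) (v j)))
    {w : L} {i j : Fin k} (h1 : w ∈ mSup u v i) (h2 : w ∈ mSdown u v j) :
    u i ∈ mSdown u v j := by
  obtain ⟨hn1, s, hs, hsw⟩ := mSup_def.mp h1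
  obtain ⟨hn2, t, ht, hwt⟩ := mSdown_def.mp h2
  have hij : i ≠ j := by
    rintro rfl
    exact hn1 ⟨hs.1.trans hsw.le, hwt.le.trans ht.2⟩
  exact mSdown_def.mpr ⟨Set.disjoint_left.mp (hdisj hij) (mem_S_low hu i), t, ht,
    lt_of_le_of_lt (hs.1.trans hsw.le) hwt⟩

lemma mlow_in_S (hu : ∀ i, u i ≤ v i)
    (hdisj : Pairwise fun i j => Disjoint (Set.Icc (u i) (v i)) (Set.Icc (u j) (v j)))
    {x : L} {b : Fin k} (h : mlow u v x ∈ Set.Icc (u b) (v b)) : mlow u v x = u b := by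
  by_cases hex : ∃ i, x ∈ Set.Icc (u i) (v i)
  · obtain ⟨a, ha⟩ := hex
    have h1 := (mlow_mem hdisj ha).1
    rw [h1] at h ⊢
    by_cases hab : a = b
    · subst hab; rfl
    · exact ((Set.disjoint_left.mp (hdisj hab) (mem_S_low hu a)) h).elim
  · have h1 := (mlow_free (fun i hi => hex ⟨i, hi⟩)).1
    rw [h1] at h
    exact ((not_exists.mpr (fun i hi => hex ⟨i, hi⟩) : ¬∃ i, x ∈ Set.Icc (u i) (v i)) ⟨b, h⟩).elim

lemma mhigh_in_S (hu : ∀ i, u i ≤ v i)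
    (hdisj : Pairwise fun i j => Disjoint (Set.Icc (u i) (v i)) (Set.Icc (u j) (v j)))
    {z : L} {b : Fin k} (h : mhigh u v z ∈ Set.Icc (u b) (v b)) : mhigh u v z = v b := by
  by_cases hex : ∃ i, z ∈ Set.Icc (u i) (v i)
  · obtain ⟨a, ha⟩ := hex
    have h1 := (mlow_mem hdisj ha).2
    rw [h1] at h ⊢
    by_cases hab : a = b
    · subst hab; rfl
    · exact ((Set.disjoint_left.mp (hdisj hab) (mem_S_high hu a)) h).elim
  · have h1 := (mlow_free (fun i hi => hex ⟨i, hi⟩)).2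
    rw [h1] at h
    exact ((not_exists.mpr (fun i hi => hex ⟨i, hi⟩) : ¬∃ i, z ∈ Set.Icc (u i) (v i)) ⟨b, h⟩).elim

lemma mem_Dn_of (hu : ∀ i, u i ≤ v i) {w : L} {b : Fin k} (h1 : w ≤ v b)
    (h2 : w ∉ Set.Icc (u b) (v b)) : w ∈ mSdown u v b :=
  mSdown_def.mpr ⟨h2, v b, mem_S_high hu b,
    lt_of_le_of_ne h1 (fun he => h2 (he ▸ mem_S_high hu b))⟩

lemma mem_Up_of (hu : ∀ i, u i ≤ v i) {w : L} {b : Fin k} (h1 : u b ≤ w)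
    (h2 : w ∉ Set.Icc (u b) (v b)) : w ∈ mSup u v b :=
  mSup_def.mpr ⟨h2, u b, mem_S_low hu b,
    lt_of_le_of_ne h1 (fun he => h2 (he.symm ▸ mem_S_low hu b))⟩

/-- `ℕ`-indexed version of `mle`. -/
def mle' (u v : Fin k → L) (x y : L) : Prop :=
  mlow u v x ≤ mhigh u v y ∨
    ∃ (n : ℕ) (c : ℕ → Fin k),
      mlow u v x ∈ mSdown u v (c 0) ∧
      (∀ j < n, u (c j) ∈ mSdown u v (c (j + 1))) ∧
      mhigh u v y ∈ mSup u v (c n)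

lemma mle_iff {x y : L} : mle u v x y ↔ mle' u v x y := by
  constructor
  · rintro (h | ⟨n, c, h0, hl, hn⟩)
    · exact Or.inl h
    · set c' : ℕ → Fin k := fun j => c ⟨min j n, by omega⟩ with hc'
      have e0 : c' 0 = c 0 := congrArg c (Fin.ext (by simp))
      have eend : c' n = c (Fin.last n) := congrArg c (Fin.ext (by simp [Fin.last]))
      refine Or.inr ⟨n, c', ?_, ?_, ?_⟩
      · rw [e0]; exact h0
      · intro j hj
        have e1 : c' j = c (Fin.castSucc ⟨j, hj⟩) := congrArg c (Fin.ext (by simp; omega))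
        have e2 : c' (j + 1) = c (Fin.succ ⟨j, hj⟩) := congrArg c (Fin.ext (by simp; omega))
        rw [e1, e2]
        exact hl ⟨j, hj⟩
      · rw [eend]; exact hn
  · rintro (h | ⟨n, c, h0, hl, hn⟩)
    · exact Or.inl h
    · refine Or.inr ⟨n, fun j : Fin (n + 1) => c j.val, ?_, ?_, ?_⟩
      · show mlow u v x ∈ mSdown u v (c ((0 : Fin (n + 1)) : ℕ))
        rw [Fin.val_zero]
        exact h0
      · intro jf
        show u (c (jf.castSucc : ℕ)) ∈ mSdown u v (c (jf.succ : ℕ))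
        rw [Fin.coe_castSucc, Fin.val_succ]
        exact hl jf.val jf.isLt
      · show mhigh u v y ∈ mSup u v (c ((Fin.last n : Fin (n + 1)) : ℕ))
        rw [Fin.val_last]
        exact hn

lemma loop_false (hnocyc : ¬ ∃ q, 2 ≤ q ∧ hasCyc u v q) {n : ℕ} {c : ℕ → Fin k}
    (hc : ∀ r < n, crel u v (c r) (c (r + 1))) (hlast : crel u v (c n) (c 0)) : False := by
  rcases Nat.eq_zero_or_pos n with rfl | hn
  · exact hlast.1 rfl
  · refine hnocyc ⟨n + 1, by omega, fun j => c (j % (n + 1)), fun j => by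
      show c ((j + (n + 1)) % (n + 1)) = _
      rw [Nat.add_mod_right], fun j => ?_⟩
    show crel u v (c (j % (n + 1))) (c ((j + 1) % (n + 1)))
    rw [succ_mod (n + 1) j (by omega)]
    have hj : j % (n + 1) < n + 1 := Nat.mod_lt _ (by omega)
    by_cases hcase : j % (n + 1) + 1 = n + 1
    · rw [if_pos hcase, show j % (n + 1) = n from by omega]
      exact hlast
    · rw [if_neg hcase]
      exact hc _ (by omega)

end AuxIcc

section AuxTrans

variable {L : Type*} [Lattice L] {k : ℕ} {u v : Fin k → L}

lemma mle'_trans (hu : ∀ i, u i ≤ v i)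
    (hdisj : Pairwise fun i j => Disjoint (Set.Icc (u i) (v i)) (Set.Icc (u j) (v j)))
    {x y z : L} (hxy : mle' u v x y) (hyz : mle' u v y z) : mle' u v x z := by
  rcases hxy with hA | ⟨n, c, hc0, hcl, hcn⟩
  · rcases hyz with hB | ⟨m, d, hd0, hdl, hdm⟩
    · -- inl / inl
      by_cases hex : ∃ i, y ∈ Set.Icc (u i) (v i)
      · obtain ⟨b, hb⟩ := hex
        obtain ⟨hyl, hyh⟩ := mlow_mem hdisj hb
        rw [hyh] at hA
        rw [hyl] at hB
        by_cases hmem : mlow u v x ∈ Set.Icc (u b) (v b)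
        · left
          rw [mlow_in_S hu hdisj hmem]
          exact hB
        · by_cases hmem2 : mhigh u v z ∈ Set.Icc (u b) (v b)
          · left
            rw [mhigh_in_S hu hdisj hmem2]
            exact hA
          · exact Or.inr ⟨0, fun _ => b, mem_Dn_of hu hA hmem,
              fun j hj => absurd hj (by omega), mem_Up_of hu hB hmem2⟩
      · obtain ⟨hyl, hyh⟩ := mlow_free (fun i hi => hex ⟨i, hi⟩)
        rw [hyh] at hA
        rw [hyl] at hB
        exact Or.inl (hA.trans hB)
    · -- inl / chain
      by_cases hex : ∃ i, y ∈ Set.Icc (u i) (v i)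
      · obtain ⟨b, hb⟩ := hex
        obtain ⟨hyl, hyh⟩ := mlow_mem hdisj hb
        rw [hyh] at hA
        rw [hyl] at hd0
        by_cases hmem : mlow u v x ∈ Set.Icc (u b) (v b)
        · refine Or.inr ⟨m, d, ?_, hdl, hdm⟩
          rw [mlow_in_S hu hdisj hmem]
          exact hd0
        · refine Or.inr ⟨m + 1, consC b d, ?_, ?_, ?_⟩
          · rw [consC_zero]
            exact mem_Dn_of hu hA hmem
          · exact consC_chain (P := fun i j => u i ∈ mSdown u v j) hdl hd0
          · rw [consC_succ]
            exact hdm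
      · obtain ⟨hyl, hyh⟩ := mlow_free (fun i hi => hex ⟨i, hi⟩)
        rw [hyh] at hA
        rw [hyl] at hd0
        by_cases hmem : mlow u v x ∈ Set.Icc (u (d 0)) (v (d 0))
        · have hx0 : mlow u v x = u (d 0) := mlow_in_S hu hdisj hmem
          rcases Nat.eq_zero_or_pos m with rfl | hm
          · left
            obtain ⟨hn2, t, ht, hlt⟩ := mSup_def.mp hdm
            rw [hx0]
            exact ht.1.trans hlt.le
          · refine Or.inr ⟨m - 1, fun r => d (r + 1), ?_, ?_, ?_⟩
            · rw [hx0]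
              exact hdl 0 hm
            · intro j hj
              exact hdl (j + 1) (by omega)
            · show mhigh u v z ∈ mSup u v (d (m - 1 + 1))
              rw [show m - 1 + 1 = m from by omega]
              exact hdm
        · obtain ⟨hn0, s, hs, hys⟩ := mSdown_def.mp hd0
          exact Or.inr ⟨m, d, mSdown_def.mpr ⟨hmem, s, hs, lt_of_le_of_lt hA hys⟩, hdl, hdm⟩
  · rcases hyz with hB | ⟨m, d, hd0, hdl, hdm⟩
    · -- chain / inl
      by_cases hex : ∃ i, y ∈ Set.Icc (u i) (v i)
      · obtain ⟨b, hb⟩ := hex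
        obtain ⟨hyl, hyh⟩ := mlow_mem hdisj hb
        rw [hyh] at hcn
        rw [hyl] at hB
        by_cases hmem : mhigh u v z ∈ Set.Icc (u b) (v b)
        · refine Or.inr ⟨n, c, hc0, hcl, ?_⟩
          rw [mhigh_in_S hu hdisj hmem]
          exact hcn
        · refine Or.inr ⟨n + 1, snocC n c b, ?_, ?_, ?_⟩
          · rw [snocC_le _ _ (Nat.zero_le n)]
            exact hc0
          · exact snocC_chain (P := fun i j => u i ∈ mSdown u v j) hcl (H5 hu hdisj hcn)
          · rw [snocC_gt _ _ (by omega)]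
            exact mem_Up_of hu hB hmem
      · obtain ⟨hyl, hyh⟩ := mlow_free (fun i hi => hex ⟨i, hi⟩)
        rw [hyh] at hcn
        rw [hyl] at hB
        by_cases hmem : mhigh u v z ∈ Set.Icc (u (c n)) (v (c n))
        · have hz : mhigh u v z = v (c n) := mhigh_in_S hu hdisj hmem
          rcases Nat.eq_zero_or_pos n with rfl | hn
          · left
            obtain ⟨hn0, s, hs, hxs⟩ := mSdown_def.mp hc0
            rw [hz]
            exact hxs.le.trans hs.2
          · refine Or.inr ⟨n - 1, c, hc0, fun j hj => hcl j (by omega), ?_⟩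
            have h6 := H6 hu hdisj (hcl (n - 1) (by omega))
            rw [show n - 1 + 1 = n from by omega] at h6
            rw [hz]
            exact h6
        · obtain ⟨hn0, s, hs, hsy⟩ := mSup_def.mp hcn
          exact Or.inr ⟨n, c, hc0, hcl, mSup_def.mpr ⟨hmem, s, hs, lt_of_lt_of_le hsy hB⟩⟩
    · -- chain / chain
      by_cases hex : ∃ i, y ∈ Set.Icc (u i) (v i)
      · obtain ⟨b, hb⟩ := hex
        obtain ⟨hyl, hyh⟩ := mlow_mem hdisj hb
        rw [hyh] at hcn
        rw [hyl] at hd0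
        refine Or.inr ⟨n + (m + 1) + 1, catC n c (consC b d), ?_, ?_, ?_⟩
        · rw [catC_le _ _ (Nat.zero_le n)]
          exact hc0
        · refine catC_chain (P := fun i j => u i ∈ mSdown u v j) hcl
            (consC_chain (P := fun i j => u i ∈ mSdown u v j) hdl hd0) ?_
          rw [consC_zero]
          exact H5 hu hdisj hcn
        · rw [catC_gt _ _ (by omega), show n + (m + 1) + 1 - (n + 1) = m + 1 from by omega,
            consC_succ]
          exact hdm
      · obtain ⟨hyl, hyh⟩ := mlow_free (fun i hi => hex ⟨i, hi⟩)
        rw [hyh] at hcn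
        rw [hyl] at hd0
        refine Or.inr ⟨n + m + 1, catC n c d, ?_, ?_, ?_⟩
        · rw [catC_le _ _ (Nat.zero_le n)]
          exact hc0
        · exact catC_chain (P := fun i j => u i ∈ mSdown u v j) hcl hdl (H7 hu hdisj hcn hd0)
        · rw [catC_gt _ _ (by omega), show n + m + 1 - (n + 1) = m from by omega]
          exact hdm

end AuxTrans

section AuxAntisymm

variable {L : Type*} [Lattice L] {k : ℕ} {u v : Fin k → L}

lemma mle'_antisymm (hnocyc : ¬ ∃ q, 2 ≤ q ∧ hasCyc u v q) (hu : ∀ i, u i ≤ v i)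
    (hdisj : Pairwise fun i j => Disjoint (Set.Icc (u i) (v i)) (Set.Icc (u j) (v j)))
    {x y : L} (hxy : mle' u v x y) (hyx : mle' u v y x) : mrel u v x y := by
  have linkify : ∀ (N : ℕ) (c : ℕ → Fin k),
      (∀ j < N, u (c j) ∈ mSdown u v (c (j + 1))) →
      ∀ j < N, crel u v (c j) (c (j + 1)) :=
    fun N c h j hj => crel_of_Dn hu (h j hj)
  rcases hxy with hA | ⟨n, c, hc0, hcl, hcn⟩
  · rcases hyx with hB | ⟨m, d, hd0, hdl, hdm⟩
    · -- inl / inl : the genuine "equal classes" case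
      by_cases hex : ∃ i, x ∈ Set.Icc (u i) (v i)
      · obtain ⟨a, ha⟩ := hex
        obtain ⟨hxl, hxh⟩ := mlow_mem hdisj ha
        by_cases hey : ∃ i, y ∈ Set.Icc (u i) (v i)
        · obtain ⟨b, hb⟩ := hey
          obtain ⟨hyl, hyh⟩ := mlow_mem hdisj hb
          rw [hxl, hyh] at hA
          rw [hyl, hxh] at hB
          by_cases hab : a = b
          · subst hab
            exact Or.inr ⟨a, ha, hb⟩
          · exact (no2 hu hdisj ⟨hab, hA⟩ ⟨Ne.symm hab, hB⟩).elim
        · obtain ⟨hyl, hyh⟩ := mlow_free (fun i hi => hey ⟨i, hi⟩)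
          rw [hxl, hyh] at hA
          rw [hyl, hxh] at hB
          exact ((fun i hi => hey ⟨i, hi⟩ : ∀ i, y ∉ Set.Icc (u i) (v i)) a ⟨hA, hB⟩).elim
      · obtain ⟨hxl, hxh⟩ := mlow_free (fun i hi => hex ⟨i, hi⟩)
        by_cases hey : ∃ i, y ∈ Set.Icc (u i) (v i)
        · obtain ⟨b, hb⟩ := hey
          obtain ⟨hyl, hyh⟩ := mlow_mem hdisj hb
          rw [hxl, hyh] at hA
          rw [hyl, hxh] at hB
          exact ((fun i hi => hex ⟨i, hi⟩ : ∀ i, x ∉ Set.Icc (u i) (v i)) b ⟨hB, hA⟩).elim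
        · obtain ⟨hyl, hyh⟩ := mlow_free (fun i hi => hey ⟨i, hi⟩)
          rw [hxl, hyh] at hA
          rw [hyl, hxh] at hB
          exact Or.inl (le_antisymm hA hB)
    · -- inl / chain (y → x chain)
      have hdlinks := linkify m d hdl
      by_cases hex : ∃ i, x ∈ Set.Icc (u i) (v i)
      · obtain ⟨a, ha⟩ := hex
        obtain ⟨hxl, hxh⟩ := mlow_mem hdisj ha
        rw [hxh] at hdm
        by_cases hey : ∃ i, y ∈ Set.Icc (u i) (v i)
        · obtain ⟨b, hb⟩ := hey
          obtain ⟨hyl, hyh⟩ := mlow_mem hdisj hb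
          rw [hxl, hyh] at hA
          rw [hyl] at hd0
          by_cases hab : a = b
          · subst hab
            exact Or.inr ⟨a, ha, hb⟩
          · exfalso
            have l1' : crel u v (d m) a := G5 hdm (mem_S_high hu a) le_rfl
            have l2 : crel u v a b := ⟨hab, hA⟩
            have l3 : crel u v b (d 0) := crel_of_Dn hu hd0
            have hch : ∀ r < m + 1 + 1,
                crel u v (snocC (m + 1) (snocC m d a) b r) (snocC (m + 1) (snocC m d a) b (r + 1)) := by
              refine snocC_chain (P := crel u v)
                (snocC_chain (P := crel u v) hdlinks l1') ?_
              rw [snocC_gt _ _ (by omega)]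
              exact l2
            have hw : crel u v (snocC (m + 1) (snocC m d a) b (m + 1 + 1))
                (snocC (m + 1) (snocC m d a) b 0) := by
              rw [snocC_gt _ _ (by omega), snocC_le _ _ (by omega), snocC_le _ _ (by omega)]
              exact l3
            exact loop_false hnocyc hch hw
        · obtain ⟨hyl, hyh⟩ := mlow_free (fun i hi => hey ⟨i, hi⟩)
          rw [hxl, hyh] at hA
          rw [hyl] at hd0
          exfalso
          have l1 : crel u v (d m) a := G5 hdm (mem_S_high hu a) le_rfl
          have l2 : crel u v a (d 0) := G6 (mem_S_low hu a) hd0 hA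
          exact loop_false hnocyc (snocC_chain (P := crel u v) hdlinks l1)
            (by rw [snocC_gt _ _ (by omega), snocC_le _ _ (by omega)]; exact l2)
      · obtain ⟨hxl, hxh⟩ := mlow_free (fun i hi => hex ⟨i, hi⟩)
        rw [hxh] at hdm
        by_cases hey : ∃ i, y ∈ Set.Icc (u i) (v i)
        · obtain ⟨b, hb⟩ := hey
          obtain ⟨hyl, hyh⟩ := mlow_mem hdisj hb
          rw [hxl, hyh] at hA
          rw [hyl] at hd0
          exfalso
          have l1 : crel u v (d m) b := G5 hdm (mem_S_high hu b) hA
          have l2 : crel u v b (d 0) := crel_of_Dn hu hd0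
          exact loop_false hnocyc (snocC_chain (P := crel u v) hdlinks l1)
            (by rw [snocC_gt _ _ (by omega), snocC_le _ _ (by omega)]; exact l2)
        · obtain ⟨hyl, hyh⟩ := mlow_free (fun i hi => hey ⟨i, hi⟩)
          rw [hxl, hyh] at hA
          rw [hyl] at hd0
          exact (loop_false hnocyc hdlinks (G1 hdm hd0 hA)).elim
  · rcases hyx with hB | ⟨m, d, hd0, hdl, hdm⟩
    · -- chain (x → y) / inl
      have hclinks := linkify n c hcl
      by_cases hex : ∃ i, x ∈ Set.Icc (u i) (v i)
      · obtain ⟨a, ha⟩ := hex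
        obtain ⟨hxl, hxh⟩ := mlow_mem hdisj ha
        rw [hxl] at hc0
        by_cases hey : ∃ i, y ∈ Set.Icc (u i) (v i)
        · obtain ⟨b, hb⟩ := hey
          obtain ⟨hyl, hyh⟩ := mlow_mem hdisj hb
          rw [hyh] at hcn
          rw [hyl, hxh] at hB
          by_cases hab : a = b
          · subst hab
            exact Or.inr ⟨a, ha, hb⟩
          · exfalso
            have l1 : crel u v (c n) b := G5 hcn (mem_S_high hu b) le_rfl
            have l2 : crel u v b a := ⟨Ne.symm hab, hB⟩
            have l3 : crel u v a (c 0) := crel_of_Dn hu hc0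
            have hch : ∀ r < n + 1 + 1,
                crel u v (snocC (n + 1) (snocC n c b) a r) (snocC (n + 1) (snocC n c b) a (r + 1)) := by
              refine snocC_chain (P := crel u v)
                (snocC_chain (P := crel u v) hclinks l1) ?_
              rw [snocC_gt _ _ (by omega)]
              exact l2
            have hw : crel u v (snocC (n + 1) (snocC n c b) a (n + 1 + 1))
                (snocC (n + 1) (snocC n c b) a 0) := by
              rw [snocC_gt _ _ (by omega), snocC_le _ _ (by omega), snocC_le _ _ (by omega)]
              exact l3
            exact loop_false hnocyc hch hw
        · obtain ⟨hyl, hyh⟩ := mlow_free (fun i hi => hey ⟨i, hi⟩)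
          rw [hyh] at hcn
          rw [hyl, hxh] at hB
          exfalso
          have l1 : crel u v (c n) a := G5 hcn (mem_S_high hu a) hB
          have l2 : crel u v a (c 0) := crel_of_Dn hu hc0
          exact loop_false hnocyc (snocC_chain (P := crel u v) hclinks l1)
            (by rw [snocC_gt _ _ (by omega), snocC_le _ _ (by omega)]; exact l2)
      · obtain ⟨hxl, hxh⟩ := mlow_free (fun i hi => hex ⟨i, hi⟩)
        rw [hxl] at hc0
        by_cases hey : ∃ i, y ∈ Set.Icc (u i) (v i)
        · obtain ⟨b, hb⟩ := hey
          obtain ⟨hyl, hyh⟩ := mlow_mem hdisj hb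
          rw [hyh] at hcn
          rw [hyl, hxh] at hB
          exfalso
          have l1 : crel u v (c n) b := G5 hcn (mem_S_high hu b) le_rfl
          have l2 : crel u v b (c 0) := G6 (mem_S_low hu b) hc0 hB
          exact loop_false hnocyc (snocC_chain (P := crel u v) hclinks l1)
            (by rw [snocC_gt _ _ (by omega), snocC_le _ _ (by omega)]; exact l2)
        · obtain ⟨hyl, hyh⟩ := mlow_free (fun i hi => hey ⟨i, hi⟩)
          rw [hyh] at hcn
          rw [hyl, hxh] at hB
          exact (loop_false hnocyc hclinks (G1 hcn hc0 hB)).elim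
    · -- chain / chain
      exfalso
      have hclinks := linkify n c hcl
      have hdlinks := linkify m d hdl
      by_cases hex : ∃ i, x ∈ Set.Icc (u i) (v i)
      · obtain ⟨a, ha⟩ := hex
        obtain ⟨hxl, hxh⟩ := mlow_mem hdisj ha
        rw [hxl] at hc0
        rw [hxh] at hdm
        have lda : crel u v (d m) a := G5 hdm (mem_S_high hu a) le_rfl
        have lac : crel u v a (c 0) := crel_of_Dn hu hc0
        by_cases hey : ∃ i, y ∈ Set.Icc (u i) (v i)
        · obtain ⟨b, hb⟩ := hey
          obtain ⟨hyl, hyh⟩ := mlow_mem hdisj hb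
          rw [hyh] at hcn
          rw [hyl] at hd0
          have lcb : crel u v (c n) b := G5 hcn (mem_S_high hu b) le_rfl
          have lbd : crel u v b (d 0) := crel_of_Dn hu hd0
          -- cycle : c 0 .. c n, b, d 0 .. d m, a
          have hch2 : ∀ j < m + 1 + 1,
              crel u v (consC b (snocC m d a) j) (consC b (snocC m d a) (j + 1)) := by
            refine consC_chain (P := crel u v)
              (snocC_chain (P := crel u v) hdlinks lda) ?_
            rw [snocC_le _ _ (Nat.zero_le m)]
            exact lbd
          have hch : ∀ j < n + (m + 1 + 1) + 1,
              crel u v (catC n c (consC b (snocC m d a)) j)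
                (catC n c (consC b (snocC m d a)) (j + 1)) := by
            refine catC_chain (P := crel u v) hclinks hch2 ?_
            rw [consC_zero]
            exact lcb
          have hw : crel u v (catC n c (consC b (snocC m d a)) (n + (m + 1 + 1) + 1))
              (catC n c (consC b (snocC m d a)) 0) := by
            rw [catC_gt _ _ (by omega), show n + (m + 1 + 1) + 1 - (n + 1) = m + 1 + 1 from by omega,
              consC_succ, snocC_gt _ _ (by omega), catC_le _ _ (Nat.zero_le n)]
            exact lac
          exact loop_false hnocyc hch hw
        · obtain ⟨hyl, hyh⟩ := mlow_free (fun i hi => hey ⟨i, hi⟩)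
          rw [hyh] at hcn
          rw [hyl] at hd0
          have lcd : crel u v (c n) (d 0) := G1 hcn hd0 le_rfl
          -- cycle : c 0 .. c n, d 0 .. d m, a
          have hch : ∀ j < n + (m + 1) + 1,
              crel u v (catC n c (snocC m d a) j) (catC n c (snocC m d a) (j + 1)) := by
            refine catC_chain (P := crel u v) hclinks
              (snocC_chain (P := crel u v) hdlinks lda) ?_
            rw [snocC_le _ _ (Nat.zero_le m)]
            exact lcd
          have hw : crel u v (catC n c (snocC m d a) (n + (m + 1) + 1))
              (catC n c (snocC m d a) 0) := by
            rw [catC_gt _ _ (by omega), show n + (m + 1) + 1 - (n + 1) = m + 1 from by omega,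
              snocC_gt _ _ (by omega), catC_le _ _ (Nat.zero_le n)]
            exact lac
          exact loop_false hnocyc hch hw
      · obtain ⟨hxl, hxh⟩ := mlow_free (fun i hi => hex ⟨i, hi⟩)
        rw [hxl] at hc0
        rw [hxh] at hdm
        have ldc : crel u v (d m) (c 0) := G1 hdm hc0 le_rfl
        by_cases hey : ∃ i, y ∈ Set.Icc (u i) (v i)
        · obtain ⟨b, hb⟩ := hey
          obtain ⟨hyl, hyh⟩ := mlow_mem hdisj hb
          rw [hyh] at hcn
          rw [hyl] at hd0
          have lcb : crel u v (c n) b := G5 hcn (mem_S_high hu b) le_rfl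
          have lbd : crel u v b (d 0) := crel_of_Dn hu hd0
          -- cycle : c 0 .. c n, b, d 0 .. d m
          have hch : ∀ j < n + (m + 1) + 1,
              crel u v (catC n c (consC b d) j) (catC n c (consC b d) (j + 1)) := by
            refine catC_chain (P := crel u v) hclinks
              (consC_chain (P := crel u v) hdlinks lbd) ?_
            rw [consC_zero]
            exact lcb
          have hw : crel u v (catC n c (consC b d) (n + (m + 1) + 1))
              (catC n c (consC b d) 0) := by
            rw [catC_gt _ _ (by omega), show n + (m + 1) + 1 - (n + 1) = m + 1 from by omega,
              consC_succ, catC_le _ _ (Nat.zero_le n)]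
            exact ldc
          exact loop_false hnocyc hch hw
        · obtain ⟨hyl, hyh⟩ := mlow_free (fun i hi => hey ⟨i, hi⟩)
          rw [hyh] at hcn
          rw [hyl] at hd0
          have lcd : crel u v (c n) (d 0) := G1 hcn hd0 le_rfl
          have hch : ∀ j < n + m + 1,
              crel u v (catC n c d j) (catC n c d (j + 1)) :=
            catC_chain (P := crel u v) hclinks hdlinks lcd
          have hw : crel u v (catC n c d (n + m + 1)) (catC n c d 0) := by
            rw [catC_gt _ _ (by omega), show n + m + 1 - (n + 1) = m from by omega,
              catC_le _ _ (Nat.zero_le n)]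
            exact ldc
          exact loop_false hnocyc hch hw

end AuxAntisymm


/-- If a finite lattice contains no crown of order `l ≥ 3` as a suborder,
then every interval relation on it is order-preserving, i.e. `≤_θ` is a partial order on the
factor set. -/
theorem no_crown_implies_order_preserving {L : Type*} [Lattice L] [Finite L]
    (hnc : ¬ ∃ (l : ℕ) (x y : Fin (l + 3) → L),
        (∀ i j, x i ≤ y j ↔ (j = i ∨ j = i + 1)) ∧
        (∀ i j, i ≠ j → ¬ x i ≤ x j) ∧
        (∀ i j, i ≠ j → ¬ y i ≤ y j) ∧
        (∀ i j, ¬ y i ≤ x j)) :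
    ∀ (k : ℕ) (u v : Fin k → L), (∀ i, u i ≤ v i) →
      ∀ hdisj : Pairwise fun i j => Disjoint (Set.Icc (u i) (v i)) (Set.Icc (u j) (v j)),
      Reflexive (mLeQ u v hdisj) ∧ Transitive (mLeQ u v hdisj) ∧
      (∀ a b : Quotient (mrelSetoid u v hdisj),
        mLeQ u v hdisj a b → mLeQ u v hdisj b a → a = b) := by
  intro k u v hu hdisj
  have hnocyc : ¬ ∃ q, 2 ≤ q ∧ hasCyc u v q := no_cycle hnc hu hdisj
  refine ⟨?_, ?_, ?_⟩
  · intro a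
    obtain ⟨x, rfl⟩ := Quotient.exists_rep a
    refine ⟨x, x, rfl, rfl, Or.inl ?_⟩
    by_cases hex : ∃ i, x ∈ Set.Icc (u i) (v i)
    · obtain ⟨i, hi⟩ := hex
      obtain ⟨h1, h2⟩ := mlow_mem hdisj hi
      rw [h1, h2]
      exact hu i
    · obtain ⟨h1, h2⟩ := mlow_free (fun i hi => hex ⟨i, hi⟩)
      rw [h1, h2]
  · rintro a b cq ⟨x, y, rfl, hb, hxy⟩ ⟨y', z, hb', hcq, hyz⟩
    have hyy' : mrel u v y y' := Quotient.exact (hb.symm.trans hb')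
    have hml := mrel_lowhigh hdisj hyy'
    have hxy' : mle' u v x y := mle_iff.mp hxy
    have hyz' : mle' u v y z := by
      have h := mle_iff.mp hyz
      unfold mle' at h ⊢
      rw [← hml.1] at h
      exact h
    exact ⟨x, z, rfl, hcq, mle_iff.mpr (mle'_trans hu hdisj hxy' hyz')⟩
  · rintro a b ⟨x, y, rfl, hb, hxy⟩ ⟨y', x', hb', ha', hyx⟩
    have hyy' : mrel u v y y' := Quotient.exact (hb.symm.trans hb')
    have hxx' : mrel u v x x' := Quotient.exact ha'
    have hmy := mrel_lowhigh hdisj hyy'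
    have hmx := mrel_lowhigh hdisj hxx'
    have h1 : mle' u v x y := mle_iff.mp hxy
    have h2 : mle' u v y x := by
      have h := mle_iff.mp hyx
      unfold mle' at h ⊢
      rw [← hmy.1, ← hmx.2] at h
      exact h
    rw [hb]
    exact Quotient.sound (mle'_antisymm hnocyc hu hdisj h1 h2)
end

section
/- Let L be a finite lattice, S an interval of L, and θ = θ_S the 1-generated interval relation. Then (L/θ, ≤_θ) is a lattice if and only if S is pure, i.e., S is not part of any Penrose crown of order 3 with two other intervals; equivalently, there do not exist x,y ∈ S∥, a ∈ S↑, v ∈ S↓ with y = x ∨ v, x = y ∧ a, y ≰ a, and v ≰ x. -/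
open Classical

variable {L : Type*}

/-- The interval relation `θ_S` for the single interval `S = [u,v]`. -/
def irel [Preorder L] (u v : L) (x y : L) : Prop :=
  x = y ∨ (x ∈ Set.Icc u v ∧ y ∈ Set.Icc u v)

/-- `θ_S` as a setoid. -/
def irelSetoid [Preorder L] (u v : L) : Setoid L where
  r := irel u v
  iseqv := by
    constructor
    · intro x; exact Or.inl rfl
    · rintro x y (rfl | ⟨hx, hy⟩)
      · exact Or.inl rfl
      · exact Or.inr ⟨hy, hx⟩
    · rintro x y z (rfl | ⟨hx, hy⟩) h
      · exact h
      · rcases h with rfl | ⟨hy', hz⟩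
        · exact Or.inr ⟨hx, hy⟩
        · exact Or.inr ⟨hx, hz⟩

/-- `x_θ`, the least element of the class of `x`. -/
noncomputable def ilow [Preorder L] (u v : L) (x : L) : L :=
  if x ∈ Set.Icc u v then u else x

/-- `x^θ`, the greatest element of the class of `x`. -/
noncomputable def ihigh [Preorder L] (u v : L) (x : L) : L :=
  if x ∈ Set.Icc u v then v else x

/-- `S↓`, the elements outside `S` strictly below some element of `S`. -/
def iSdown [Preorder L] (u v : L) : Set L :=
  {z | z ∉ Set.Icc u v ∧ ∃ s ∈ Set.Icc u v, z < s}

/-- `S↑`, the elements outside `S` strictly above some element of `S`. -/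
def iSupSet [Preorder L] (u v : L) : Set L :=
  {z | z ∉ Set.Icc u v ∧ ∃ s ∈ Set.Icc u v, s < z}

/-- `S∥`, the elements outside `S` incomparable to all of `S`. -/
def iSpar [Preorder L] (u v : L) : Set L :=
  {z | z ∉ Set.Icc u v ∧ ∀ s ∈ Set.Icc u v, ¬ s < z ∧ ¬ z < s}

/-- The relation `≤_θ` on representatives. -/
def ile [Preorder L] (u v : L) (x y : L) : Prop :=
  ilow u v x ≤ ihigh u v y ∨ (x ∈ iSdown u v ∧ y ∈ iSupSet u v)

/-- The induced relation `≤_θ` on the factor set `L/θ`. -/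
def iLeQ [Preorder L] (u v : L) (a b : Quotient (irelSetoid u v)) : Prop :=
  ∃ x y : L, a = Quotient.mk (irelSetoid u v) x ∧ b = Quotient.mk (irelSetoid u v) y ∧
    ile u v x y

/-- `S` is a nested interval. -/
def iNested [Lattice L] (u v : L) : Prop :=
  ∃ x y a w : L, x ∈ iSpar u v ∧ y ∈ iSpar u v ∧ a ∈ iSupSet u v ∧ w ∈ iSdown u v ∧
    y = x ⊔ w ∧ x = y ⊓ a ∧ ¬ y ≤ a ∧ ¬ w ≤ x



section Helpers

variable [Lattice L] {u v : L}

lemma ilow_of_mem {x : L} (h : x ∈ Set.Icc u v) : ilow u v x = u := if_pos h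

lemma ilow_of_not_mem {x : L} (h : x ∉ Set.Icc u v) : ilow u v x = x := if_neg h

lemma ihigh_of_mem {x : L} (h : x ∈ Set.Icc u v) : ihigh u v x = v := if_pos h

lemma ihigh_of_not_mem {x : L} (h : x ∉ Set.Icc u v) : ihigh u v x = x := if_neg h

lemma ilow_le (x : L) : ilow u v x ≤ x := by
  by_cases h : x ∈ Set.Icc u v
  · rw [ilow_of_mem h]; exact h.1
  · rw [ilow_of_not_mem h]

lemma le_ihigh (x : L) : x ≤ ihigh u v x := by
  by_cases h : x ∈ Set.Icc u v
  · rw [ihigh_of_mem h]; exact h.2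
  · rw [ihigh_of_not_mem h]

lemma ilow_le_ihigh (huv : u ≤ v) (x : L) : ilow u v x ≤ ihigh u v x := by
  by_cases h : x ∈ Set.Icc u v
  · rw [ilow_of_mem h, ihigh_of_mem h]; exact huv
  · rw [ilow_of_not_mem h, ihigh_of_not_mem h]

lemma mem_iSdown_iff (huv : u ≤ v) {x : L} :
    x ∈ iSdown u v ↔ x ∉ Set.Icc u v ∧ x ≤ v := by
  constructor
  · rintro ⟨hx, s, hs, hlt⟩
    exact ⟨hx, hlt.le.trans hs.2⟩
  · rintro ⟨hx, hle⟩
    refine ⟨hx, v, ⟨huv, le_rfl⟩, lt_of_le_of_ne hle fun h => ?_⟩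
    exact hx (by rw [h]; exact ⟨huv, le_rfl⟩)

lemma mem_iSupSet_iff (huv : u ≤ v) {x : L} :
    x ∈ iSupSet u v ↔ x ∉ Set.Icc u v ∧ u ≤ x := by
  constructor
  · rintro ⟨hx, s, hs, hlt⟩
    exact ⟨hx, hs.1.trans hlt.le⟩
  · rintro ⟨hx, hle⟩
    refine ⟨hx, u, ⟨le_rfl, huv⟩, lt_of_le_of_ne hle fun h => ?_⟩
    exact hx (by rw [← h]; exact ⟨le_rfl, huv⟩)

lemma not_mem_both {x : L} (h1 : x ∈ iSdown u v) (h2 : x ∈ iSupSet u v) : False := by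
  obtain ⟨hx, s, hs, hlt⟩ := h1
  obtain ⟨_, t, ht, hlt'⟩ := h2
  exact hx ⟨ht.1.trans hlt'.le, hlt.le.trans hs.2⟩

lemma iSpar_not_le {x : L} (h : x ∈ iSpar u v) {s : L} (hs : s ∈ Set.Icc u v) : ¬ x ≤ s := by
  intro hle
  rcases hle.lt_or_eq with hlt | rfl
  · exact (h.2 s hs).2 hlt
  · exact h.1 hs

lemma iSpar_not_ge {x : L} (h : x ∈ iSpar u v) {s : L} (hs : s ∈ Set.Icc u v) : ¬ s ≤ x := by
  intro hle
  rcases hle.lt_or_eq with hlt | heq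
  · exact (h.2 s hs).1 hlt
  · exact h.1 (heq ▸ hs)

lemma iSpar_not_iSdown {x : L} (h : x ∈ iSpar u v) : x ∉ iSdown u v := by
  rintro ⟨_, s, hs, hlt⟩
  exact (h.2 s hs).2 hlt

lemma iSpar_not_iSupSet {x : L} (h : x ∈ iSpar u v) : x ∉ iSupSet u v := by
  rintro ⟨_, s, hs, hlt⟩
  exact (h.2 s hs).1 hlt

lemma classify (huv : u ≤ v) {x : L} (hx : x ∉ Set.Icc u v) :
    x ≤ v ∨ u ≤ x ∨ x ∈ iSpar u v := by
  by_cases h1 : x ≤ v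
  · exact Or.inl h1
  by_cases h2 : u ≤ x
  · exact Or.inr (Or.inl h2)
  exact Or.inr (Or.inr ⟨hx, fun s hs =>
    ⟨fun hlt => h2 (hs.1.trans hlt.le), fun hlt => h1 (hlt.le.trans hs.2)⟩⟩)

/-! ### Basic order properties of `ile` -/

lemma ile_refl (huv : u ≤ v) (x : L) : ile u v x x := Or.inl (ilow_le_ihigh huv x)

lemma ile_trans (huv : u ≤ v) {x y z : L} :
    ile u v x y → ile u v y z → ile u v x z := by
  rintro (h1 | ⟨hxd, hyu⟩) (h2 | ⟨hyd, hzu⟩)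
  · by_cases hy : y ∈ Set.Icc u v
    · rw [ihigh_of_mem hy] at h1
      rw [ilow_of_mem hy] at h2
      by_cases hx : x ∈ Set.Icc u v
      · left; rw [ilow_of_mem hx]; exact h2
      · rw [ilow_of_not_mem hx] at h1
        by_cases hz : z ∈ Set.Icc u v
        · left; rw [ilow_of_not_mem hx, ihigh_of_mem hz]; exact h1
        · rw [ihigh_of_not_mem hz] at h2
          right
          exact ⟨(mem_iSdown_iff huv).mpr ⟨hx, h1⟩, (mem_iSupSet_iff huv).mpr ⟨hz, h2⟩⟩
    · rw [ihigh_of_not_mem hy] at h1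
      rw [ilow_of_not_mem hy] at h2
      exact Or.inl (h1.trans h2)
  · have hy : y ∉ Set.Icc u v := hyd.1
    rw [ihigh_of_not_mem hy] at h1
    have hyv : y ≤ v := ((mem_iSdown_iff huv).mp hyd).2
    by_cases hx : x ∈ Set.Icc u v
    · rw [ilow_of_mem hx] at h1
      exact absurd ⟨h1, hyv⟩ hy
    · rw [ilow_of_not_mem hx] at h1
      exact Or.inr ⟨(mem_iSdown_iff huv).mpr ⟨hx, h1.trans hyv⟩, hzu⟩
  · have hy : y ∉ Set.Icc u v := hyu.1
    rw [ilow_of_not_mem hy] at h2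
    have huy : u ≤ y := ((mem_iSupSet_iff huv).mp hyu).2
    by_cases hz : z ∈ Set.Icc u v
    · rw [ihigh_of_mem hz] at h2
      exact absurd ⟨huy, h2⟩ hy
    · rw [ihigh_of_not_mem hz] at h2
      exact Or.inr ⟨hxd, (mem_iSupSet_iff huv).mpr ⟨hz, huy.trans h2⟩⟩
  · exact absurd hyu (fun h => not_mem_both hyd h)

lemma ile_antisymm (huv : u ≤ v) {x y : L} :
    ile u v x y → ile u v y x → irel u v x y := by
  rintro (h1 | ⟨hxd, hyu⟩) (h2 | ⟨hyd, hxu⟩)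
  · by_cases hx : x ∈ Set.Icc u v <;> by_cases hy : y ∈ Set.Icc u v
    · exact Or.inr ⟨hx, hy⟩
    · rw [ilow_of_mem hx, ihigh_of_not_mem hy] at h1
      rw [ilow_of_not_mem hy, ihigh_of_mem hx] at h2
      exact absurd ⟨h1, h2⟩ hy
    · rw [ilow_of_not_mem hx, ihigh_of_mem hy] at h1
      rw [ilow_of_mem hy, ihigh_of_not_mem hx] at h2
      exact absurd ⟨h2, h1⟩ hx
    · rw [ilow_of_not_mem hx, ihigh_of_not_mem hy] at h1
      rw [ilow_of_not_mem hy, ihigh_of_not_mem hx] at h2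
      exact Or.inl (le_antisymm h1 h2)
  · rw [ilow_of_not_mem hxu.1, ihigh_of_not_mem hyd.1] at h1
    obtain ⟨_, s, hs, hsx⟩ := hxu
    obtain ⟨hyn, t, ht, hyt⟩ := hyd
    exact absurd ⟨hs.1.trans (hsx.le.trans h1), hyt.le.trans ht.2⟩ hyn
  · rw [ilow_of_not_mem hyu.1, ihigh_of_not_mem hxd.1] at h2
    obtain ⟨_, s, hs, hsy⟩ := hyu
    obtain ⟨hxn, t, ht, hxt⟩ := hxd
    exact absurd ⟨hs.1.trans (hsy.le.trans h2), hxt.le.trans ht.2⟩ hxn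
  · exact absurd hxu (fun h => not_mem_both hxd h)

/-! ### Quotient transfer -/

lemma irel_symm {x y : L} (h : irel u v x y) : irel u v y x := by
  rcases h with rfl | ⟨h1, h2⟩
  · exact Or.inl rfl
  · exact Or.inr ⟨h2, h1⟩

lemma irel_ilow_eq {x x' : L} (h : irel u v x x') : ilow u v x = ilow u v x' := by
  rcases h with rfl | ⟨h1, h2⟩
  · rfl
  · rw [ilow_of_mem h1, ilow_of_mem h2]

lemma irel_ihigh_eq {x x' : L} (h : irel u v x x') : ihigh u v x = ihigh u v x' := by
  rcases h with rfl | ⟨h1, h2⟩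
  · rfl
  · rw [ihigh_of_mem h1, ihigh_of_mem h2]

lemma irel_iSdown_iff {x x' : L} (h : irel u v x x') : x ∈ iSdown u v ↔ x' ∈ iSdown u v := by
  rcases h with rfl | ⟨h1, h2⟩
  · exact Iff.rfl
  · exact ⟨fun hd => absurd h1 hd.1, fun hd => absurd h2 hd.1⟩

lemma irel_iSupSet_iff {x x' : L} (h : irel u v x x') : x ∈ iSupSet u v ↔ x' ∈ iSupSet u v := by
  rcases h with rfl | ⟨h1, h2⟩
  · exact Iff.rfl
  · exact ⟨fun hd => absurd h1 hd.1, fun hd => absurd h2 hd.1⟩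

lemma ile_congr {x x' y y' : L} (hx : irel u v x x') (hy : irel u v y y') :
    ile u v x y → ile u v x' y' := by
  rintro (h | ⟨h1, h2⟩)
  · left; rw [← irel_ilow_eq hx, ← irel_ihigh_eq hy]; exact h
  · right; exact ⟨(irel_iSdown_iff hx).mp h1, (irel_iSupSet_iff hy).mp h2⟩

lemma iLeQ_mk_iff {x y : L} :
    iLeQ u v (Quotient.mk (irelSetoid u v) x) (Quotient.mk (irelSetoid u v) y) ↔ ile u v x y := by
  constructor
  · rintro ⟨x', y', hx, hy, h⟩
    have hx' : irel u v x' x := irel_symm (Quotient.exact hx)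
    have hy' : irel u v y' y := irel_symm (Quotient.exact hy)
    exact ile_congr hx' hy' h
  · intro h
    exact ⟨x, y, rfl, rfl, h⟩

/-! ### Existence of least upper bounds (pure case) -/

lemma lub_swap {x y : L}
    (h : ∃ j, ile u v y j ∧ ile u v x j ∧
      ∀ z, ile u v y z → ile u v x z → ile u v j z) :
    ∃ j, ile u v x j ∧ ile u v y j ∧
      ∀ z, ile u v x z → ile u v y z → ile u v j z := by
  obtain ⟨j, h1, h2, h3⟩ := h
  exact ⟨j, h2, h1, fun z a b => h3 z b a⟩

lemma lub_mem (huv : u ≤ v) {x : L} (hx : x ∈ Set.Icc u v) (y : L) :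
    ∃ j, ile u v x j ∧ ile u v y j ∧
      ∀ z, ile u v x z → ile u v y z → ile u v j z := by
  by_cases hy : y ∈ Set.Icc u v
  · refine ⟨y, Or.inl ?_, ile_refl huv y, fun z _ hz => hz⟩
    rw [ilow_of_mem hx, ihigh_of_mem hy]; exact huv
  rcases classify huv hy with hyv | huy | hpar
  · refine ⟨x, ile_refl huv x, Or.inl ?_, fun z hz _ => hz⟩
    rw [ilow_of_not_mem hy, ihigh_of_mem hx]; exact hyv
  · refine ⟨y, Or.inl ?_, ile_refl huv y, fun z _ hz => hz⟩
    rw [ilow_of_mem hx, ihigh_of_not_mem hy]; exact huy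
  · -- y ∈ S∥, join is [y ⊔ u]
    have hj : y ⊔ u ∉ Set.Icc u v := fun h =>
      iSpar_not_le hpar ⟨huv, le_rfl⟩ (le_sup_left.trans h.2)
    refine ⟨y ⊔ u, Or.inl ?_, Or.inl ?_, ?_⟩
    · rw [ilow_of_mem hx, ihigh_of_not_mem hj]; exact le_sup_right
    · rw [ilow_of_not_mem hy, ihigh_of_not_mem hj]; exact le_sup_left
    · intro z hxz hyz
      have h1 : u ≤ ihigh u v z := by
        rcases hxz with h | ⟨hd, _⟩
        · rwa [ilow_of_mem hx] at h
        · exact absurd hx hd.1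
      have h2 : y ≤ ihigh u v z := by
        rcases hyz with h | ⟨hd, _⟩
        · rwa [ilow_of_not_mem hy] at h
        · exact absurd hd (iSpar_not_iSdown hpar)
      left
      rw [ilow_of_not_mem hj]
      exact sup_le h2 h1

lemma lub_generic (huv : u ≤ v) {x y : L} (hx : x ∉ Set.Icc u v) (hy : y ∉ Set.Icc u v)
    (hxd : x ∉ iSdown u v) (hyd : y ∉ iSdown u v) :
    ∃ j, ile u v x j ∧ ile u v y j ∧
      ∀ z, ile u v x z → ile u v y z → ile u v j z := by
  refine ⟨x ⊔ y, Or.inl ?_, Or.inl ?_, ?_⟩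
  · rw [ilow_of_not_mem hx]; exact le_sup_left.trans (le_ihigh _)
  · rw [ilow_of_not_mem hy]; exact le_sup_right.trans (le_ihigh _)
  · intro z hxz hyz
    have h1 : x ≤ ihigh u v z := by
      rcases hxz with h | ⟨hd, _⟩
      · rwa [ilow_of_not_mem hx] at h
      · exact absurd hd hxd
    have h2 : y ≤ ihigh u v z := by
      rcases hyz with h | ⟨hd, _⟩
      · rwa [ilow_of_not_mem hy] at h
      · exact absurd hd hyd
    exact Or.inl ((ilow_le _).trans (sup_le h1 h2))

lemma lub_down_down (huv : u ≤ v) {x y : L} (hx : x ∉ Set.Icc u v) (hy : y ∉ Set.Icc u v)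
    (hxv : x ≤ v) (hyv : y ≤ v) :
    ∃ j, ile u v x j ∧ ile u v y j ∧
      ∀ z, ile u v x z → ile u v y z → ile u v j z := by
  refine ⟨x ⊔ y, Or.inl ?_, Or.inl ?_, ?_⟩
  · rw [ilow_of_not_mem hx]; exact le_sup_left.trans (le_ihigh _)
  · rw [ilow_of_not_mem hy]; exact le_sup_right.trans (le_ihigh _)
  · intro z hxz hyz
    by_cases hz : z ∈ iSupSet u v
    · by_cases hj : x ⊔ y ∈ Set.Icc u v
      · left
        rw [ilow_of_mem hj, ihigh_of_not_mem hz.1]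
        exact ((mem_iSupSet_iff huv).mp hz).2
      · exact Or.inr ⟨(mem_iSdown_iff huv).mpr ⟨hj, sup_le hxv hyv⟩, hz⟩
    · have h1 : x ≤ ihigh u v z := by
        rcases hxz with h | ⟨_, hu⟩
        · rwa [ilow_of_not_mem hx] at h
        · exact absurd hu hz
      have h2 : y ≤ ihigh u v z := by
        rcases hyz with h | ⟨_, hu⟩
        · rwa [ilow_of_not_mem hy] at h
        · exact absurd hu hz
      exact Or.inl ((ilow_le _).trans (sup_le h1 h2))

lemma lub_hard (huv : u ≤ v) (hpure : ¬ iNested u v) {x y : L}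
    (hx : x ∉ Set.Icc u v) (hxv : x ≤ v) (hy : y ∈ iSpar u v) :
    ∃ j, ile u v x j ∧ ile u v y j ∧
      ∀ z, ile u v x z → ile u v y z → ile u v j z := by
  have hvI : v ∈ Set.Icc u v := ⟨huv, le_rfl⟩
  have hynv : ¬ y ≤ v := iSpar_not_le hy hvI
  have hj1 : x ⊔ y ∉ Set.Icc u v := fun h => hynv (le_sup_right.trans h.2)
  have hj2 : y ⊔ u ∉ Set.Icc u v := fun h => hynv (le_sup_left.trans h.2)
  have hj2up : y ⊔ u ∈ iSupSet u v := (mem_iSupSet_iff huv).mpr ⟨hj2, le_sup_right⟩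
  have hxd : x ∈ iSdown u v := (mem_iSdown_iff huv).mpr ⟨hx, hxv⟩
  have key : ∀ z, ile u v y z → y ≤ ihigh u v z := by
    intro z hz
    rcases hz with h | ⟨hd, _⟩
    · rwa [ilow_of_not_mem hy.1] at h
    · exact absurd hd (iSpar_not_iSdown hy)
  by_cases h1 : u ≤ x ⊔ y
  · -- join is [y ⊔ u]
    refine ⟨y ⊔ u, Or.inr ⟨hxd, hj2up⟩, Or.inl ?_, ?_⟩
    · rw [ilow_of_not_mem hy.1, ihigh_of_not_mem hj2]; exact le_sup_left
    · intro z hxz hyz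
      have hyz' := key z hyz
      rcases hxz with hxz | ⟨_, hzu⟩
      · rw [ilow_of_not_mem hx] at hxz
        left
        rw [ilow_of_not_mem hj2]
        exact (sup_le le_sup_right h1).trans (sup_le hxz hyz')
      · have hz : z ∉ Set.Icc u v := hzu.1
        have huz : u ≤ z := ((mem_iSupSet_iff huv).mp hzu).2
        rw [ihigh_of_not_mem hz] at hyz'
        left
        rw [ilow_of_not_mem hj2, ihigh_of_not_mem hz]
        exact sup_le hyz' huz
  · by_cases h2 : x ≤ y ⊔ u
    · -- join is [x ⊔ y]
      refine ⟨x ⊔ y, Or.inl ?_, Or.inl ?_, ?_⟩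
      · rw [ilow_of_not_mem hx, ihigh_of_not_mem hj1]; exact le_sup_left
      · rw [ilow_of_not_mem hy.1, ihigh_of_not_mem hj1]; exact le_sup_right
      · intro z hxz hyz
        have hyz' := key z hyz
        left
        rw [ilow_of_not_mem hj1]
        rcases hxz with hxz | ⟨_, hzu⟩
        · rw [ilow_of_not_mem hx] at hxz
          exact sup_le hxz hyz'
        · have hz : z ∉ Set.Icc u v := hzu.1
          have huz : u ≤ z := ((mem_iSupSet_iff huv).mp hzu).2
          rw [ihigh_of_not_mem hz] at hyz' ⊢
          exact sup_le (h2.trans (sup_le hyz' huz)) hyz'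
    · -- nested configuration
      exfalso
      apply hpure
      have hyX : y ≤ (x ⊔ y) ⊓ (y ⊔ u) := le_inf le_sup_right le_sup_left
      refine ⟨(x ⊔ y) ⊓ (y ⊔ u), x ⊔ y, y ⊔ u, x, ?_, ?_, hj2up, hxd, ?_, rfl, ?_, ?_⟩
      · refine ⟨fun h => h1 (h.1.trans inf_le_left), fun s hs => ⟨?_, ?_⟩⟩
        · intro hlt
          exact h1 ((hs.1.trans hlt.le).trans inf_le_left)
        · intro hlt
          exact (hy.2 s hs).2 (lt_of_le_of_lt hyX hlt)
      · refine ⟨hj1, fun s hs => ⟨?_, ?_⟩⟩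
        · intro hlt
          exact h1 (hs.1.trans hlt.le)
        · intro hlt
          exact (hy.2 s hs).2 (lt_of_le_of_lt le_sup_right hlt)
      · exact le_antisymm (sup_le le_sup_right (hyX.trans le_sup_left))
          (sup_le inf_le_left le_sup_left)
      · exact fun h => h2 (le_sup_left.trans h)
      · exact fun h => h2 (h.trans inf_le_right)

lemma exists_ile_lub (huv : u ≤ v) (hpure : ¬ iNested u v) (x y : L) :
    ∃ j, ile u v x j ∧ ile u v y j ∧
      ∀ z, ile u v x z → ile u v y z → ile u v j z := by
  by_cases hx : x ∈ Set.Icc u v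
  · exact lub_mem huv hx y
  by_cases hy : y ∈ Set.Icc u v
  · exact lub_swap (lub_mem huv hy x)
  rcases classify huv hx with hxv | hux | hxpar
  · rcases classify huv hy with hyv | huy | hypar
    · exact lub_down_down huv hx hy hxv hyv
    · refine ⟨y, Or.inr ⟨(mem_iSdown_iff huv).mpr ⟨hx, hxv⟩,
        (mem_iSupSet_iff huv).mpr ⟨hy, huy⟩⟩, ile_refl huv y, fun z _ hz => hz⟩
    · exact lub_hard huv hpure hx hxv hypar
  · have hxd : x ∉ iSdown u v := fun h =>
      hx ⟨hux, ((mem_iSdown_iff huv).mp h).2⟩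
    rcases classify huv hy with hyv | huy | hypar
    · refine ⟨x, ile_refl huv x, Or.inr ⟨(mem_iSdown_iff huv).mpr ⟨hy, hyv⟩,
        (mem_iSupSet_iff huv).mpr ⟨hx, hux⟩⟩, fun z hz _ => hz⟩
    · have hyd : y ∉ iSdown u v := fun h =>
        hy ⟨huy, ((mem_iSdown_iff huv).mp h).2⟩
      exact lub_generic huv hx hy hxd hyd
    · exact lub_generic huv hx hy hxd (iSpar_not_iSdown hypar)
  · rcases classify huv hy with hyv | huy | hypar
    · exact lub_swap (lub_hard huv hpure hy hyv hxpar)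
    · have hyd : y ∉ iSdown u v := fun h =>
        hy ⟨huy, ((mem_iSdown_iff huv).mp h).2⟩
      exact lub_generic huv hx hy (iSpar_not_iSdown hxpar) hyd
    · exact lub_generic huv hx hy (iSpar_not_iSdown hxpar) (iSpar_not_iSdown hypar)

/-! ### Existence of greatest lower bounds (pure case) -/

lemma glb_swap {x y : L}
    (h : ∃ m, ile u v m y ∧ ile u v m x ∧
      ∀ z, ile u v z y → ile u v z x → ile u v z m) :
    ∃ m, ile u v m x ∧ ile u v m y ∧
      ∀ z, ile u v z x → ile u v z y → ile u v z m := by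
  obtain ⟨m, h1, h2, h3⟩ := h
  exact ⟨m, h2, h1, fun z a b => h3 z b a⟩

lemma glb_mem (huv : u ≤ v) {x : L} (hx : x ∈ Set.Icc u v) (y : L) :
    ∃ m, ile u v m x ∧ ile u v m y ∧
      ∀ z, ile u v z x → ile u v z y → ile u v z m := by
  by_cases hy : y ∈ Set.Icc u v
  · refine ⟨y, Or.inl ?_, ile_refl huv y, fun z _ hz => hz⟩
    rw [ilow_of_mem hy, ihigh_of_mem hx]; exact huv
  rcases classify huv hy with hyv | huy | hpar
  · refine ⟨y, Or.inl ?_, ile_refl huv y, fun z _ hz => hz⟩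
    rw [ilow_of_not_mem hy, ihigh_of_mem hx]; exact hyv
  · refine ⟨x, ile_refl huv x, Or.inl ?_, fun z hz _ => hz⟩
    rw [ilow_of_mem hx, ihigh_of_not_mem hy]; exact huy
  · -- y ∈ S∥, meet is [y ⊓ v]
    have hm : y ⊓ v ∉ Set.Icc u v := fun h =>
      iSpar_not_ge hpar ⟨le_rfl, huv⟩ (h.1.trans inf_le_left)
    refine ⟨y ⊓ v, Or.inl ?_, Or.inl ?_, ?_⟩
    · rw [ilow_of_not_mem hm, ihigh_of_mem hx]; exact inf_le_right
    · rw [ilow_of_not_mem hm, ihigh_of_not_mem hy]; exact inf_le_left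
    · intro z hzx hzy
      have h1 : ilow u v z ≤ v := by
        rcases hzx with h | ⟨_, hu⟩
        · rwa [ihigh_of_mem hx] at h
        · exact absurd hx hu.1
      have h2 : ilow u v z ≤ y := by
        rcases hzy with h | ⟨_, hu⟩
        · rwa [ihigh_of_not_mem hy] at h
        · exact absurd hu (iSpar_not_iSupSet hpar)
      left
      rw [ihigh_of_not_mem hm]
      exact le_inf h2 h1

lemma glb_generic (huv : u ≤ v) {x y : L} (hx : x ∉ Set.Icc u v) (hy : y ∉ Set.Icc u v)
    (hxu : x ∉ iSupSet u v) (hyu : y ∉ iSupSet u v) :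
    ∃ m, ile u v m x ∧ ile u v m y ∧
      ∀ z, ile u v z x → ile u v z y → ile u v z m := by
  refine ⟨x ⊓ y, Or.inl ?_, Or.inl ?_, ?_⟩
  · rw [ihigh_of_not_mem hx]; exact (ilow_le _).trans inf_le_left
  · rw [ihigh_of_not_mem hy]; exact (ilow_le _).trans inf_le_right
  · intro z hzx hzy
    have h1 : ilow u v z ≤ x := by
      rcases hzx with h | ⟨_, hu⟩
      · rwa [ihigh_of_not_mem hx] at h
      · exact absurd hu hxu
    have h2 : ilow u v z ≤ y := by
      rcases hzy with h | ⟨_, hu⟩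
      · rwa [ihigh_of_not_mem hy] at h
      · exact absurd hu hyu
    exact Or.inl ((le_inf h1 h2).trans (le_ihigh _))

lemma glb_up_up (huv : u ≤ v) {x y : L} (hx : x ∉ Set.Icc u v) (hy : y ∉ Set.Icc u v)
    (hux : u ≤ x) (huy : u ≤ y) :
    ∃ m, ile u v m x ∧ ile u v m y ∧
      ∀ z, ile u v z x → ile u v z y → ile u v z m := by
  refine ⟨x ⊓ y, Or.inl ?_, Or.inl ?_, ?_⟩
  · rw [ihigh_of_not_mem hx]; exact (ilow_le _).trans inf_le_left
  · rw [ihigh_of_not_mem hy]; exact (ilow_le _).trans inf_le_right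
  · intro z hzx hzy
    by_cases hz : z ∈ iSdown u v
    · by_cases hm : x ⊓ y ∈ Set.Icc u v
      · left
        rw [ilow_of_not_mem hz.1, ihigh_of_mem hm]
        exact ((mem_iSdown_iff huv).mp hz).2
      · exact Or.inr ⟨hz, (mem_iSupSet_iff huv).mpr ⟨hm, le_inf hux huy⟩⟩
    · have h1 : ilow u v z ≤ x := by
        rcases hzx with h | ⟨hd, _⟩
        · rwa [ihigh_of_not_mem hx] at h
        · exact absurd hd hz
      have h2 : ilow u v z ≤ y := by
        rcases hzy with h | ⟨hd, _⟩
        · rwa [ihigh_of_not_mem hy] at h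
        · exact absurd hd hz
      exact Or.inl ((le_inf h1 h2).trans (le_ihigh _))

lemma glb_hard (huv : u ≤ v) (hpure : ¬ iNested u v) {x y : L}
    (hx : x ∉ Set.Icc u v) (hux : u ≤ x) (hy : y ∈ iSpar u v) :
    ∃ m, ile u v m x ∧ ile u v m y ∧
      ∀ z, ile u v z x → ile u v z y → ile u v z m := by
  have huI : u ∈ Set.Icc u v := ⟨le_rfl, huv⟩
  have hynu : ¬ u ≤ y := iSpar_not_ge hy huI
  have hm1 : x ⊓ y ∉ Set.Icc u v := fun h => hynu (h.1.trans inf_le_right)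
  have hm2 : y ⊓ v ∉ Set.Icc u v := fun h => hynu (h.1.trans inf_le_left)
  have hm2down : y ⊓ v ∈ iSdown u v := (mem_iSdown_iff huv).mpr ⟨hm2, inf_le_right⟩
  have hxup : x ∈ iSupSet u v := (mem_iSupSet_iff huv).mpr ⟨hx, hux⟩
  have key : ∀ z, ile u v z y → ilow u v z ≤ y := by
    intro z hz
    rcases hz with h | ⟨_, hu⟩
    · rwa [ihigh_of_not_mem hy.1] at h
    · exact absurd hu (iSpar_not_iSupSet hy)
  by_cases h1 : x ⊓ y ≤ v
  · -- meet is [y ⊓ v]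
    refine ⟨y ⊓ v, Or.inr ⟨hm2down, hxup⟩, Or.inl ?_, ?_⟩
    · rw [ilow_of_not_mem hm2, ihigh_of_not_mem hy.1]; exact inf_le_left
    · intro z hzx hzy
      have hzy' := key z hzy
      rcases hzx with hzx | ⟨hzd, _⟩
      · rw [ihigh_of_not_mem hx] at hzx
        left
        rw [ihigh_of_not_mem hm2]
        exact (le_inf hzx hzy').trans (le_inf inf_le_right h1)
      · have hz : z ∉ Set.Icc u v := hzd.1
        have hzv : z ≤ v := ((mem_iSdown_iff huv).mp hzd).2
        rw [ilow_of_not_mem hz] at hzy'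
        left
        rw [ilow_of_not_mem hz, ihigh_of_not_mem hm2]
        exact le_inf hzy' hzv
  · by_cases h2 : y ⊓ v ≤ x
    · -- meet is [x ⊓ y]
      refine ⟨x ⊓ y, Or.inl ?_, Or.inl ?_, ?_⟩
      · rw [ilow_of_not_mem hm1, ihigh_of_not_mem hx]; exact inf_le_left
      · rw [ilow_of_not_mem hm1, ihigh_of_not_mem hy.1]; exact inf_le_right
      · intro z hzx hzy
        have hzy' := key z hzy
        left
        rw [ihigh_of_not_mem hm1]
        rcases hzx with hzx | ⟨hzd, _⟩
        · rw [ihigh_of_not_mem hx] at hzx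
          exact le_inf hzx hzy'
        · have hz : z ∉ Set.Icc u v := hzd.1
          have hzv : z ≤ v := ((mem_iSdown_iff huv).mp hzd).2
          rw [ilow_of_not_mem hz] at hzy' ⊢
          exact le_inf ((le_inf hzy' hzv).trans h2) hzy'
    · -- nested configuration
      exfalso
      apply hpure
      have hYy : (x ⊓ y) ⊔ (y ⊓ v) ≤ y := sup_le inf_le_right inf_le_left
      refine ⟨x ⊓ y, (x ⊓ y) ⊔ (y ⊓ v), x, y ⊓ v, ?_, ?_, hxup, hm2down, rfl, ?_, ?_, ?_⟩
      · refine ⟨hm1, fun s hs => ⟨?_, ?_⟩⟩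
        · intro hlt
          exact hynu ((hs.1.trans hlt.le).trans inf_le_right)
        · intro hlt
          exact h1 (hlt.le.trans hs.2)
      · refine ⟨fun h => hynu (h.1.trans hYy), fun s hs => ⟨?_, ?_⟩⟩
        · intro hlt
          exact hynu ((hs.1.trans hlt.le).trans hYy)
        · intro hlt
          exact h1 ((le_sup_left.trans hlt.le).trans hs.2)
      · exact le_antisymm (le_inf le_sup_left inf_le_left)
          (le_inf inf_le_right (inf_le_left.trans hYy))
      · exact fun h => h2 (le_sup_right.trans h)
      · exact fun h => h2 (h.trans inf_le_left)

lemma exists_ile_glb (huv : u ≤ v) (hpure : ¬ iNested u v) (x y : L) :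
    ∃ m, ile u v m x ∧ ile u v m y ∧
      ∀ z, ile u v z x → ile u v z y → ile u v z m := by
  by_cases hx : x ∈ Set.Icc u v
  · exact glb_mem huv hx y
  by_cases hy : y ∈ Set.Icc u v
  · exact glb_swap (glb_mem huv hy x)
  rcases classify huv hx with hxv | hux | hxpar
  · have hxu : x ∉ iSupSet u v := fun h =>
      hx ⟨((mem_iSupSet_iff huv).mp h).2, hxv⟩
    rcases classify huv hy with hyv | huy | hypar
    · have hyu : y ∉ iSupSet u v := fun h =>
        hy ⟨((mem_iSupSet_iff huv).mp h).2, hyv⟩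
      exact glb_generic huv hx hy hxu hyu
    · refine ⟨x, ile_refl huv x, Or.inr ⟨(mem_iSdown_iff huv).mpr ⟨hx, hxv⟩,
        (mem_iSupSet_iff huv).mpr ⟨hy, huy⟩⟩, fun z hz _ => hz⟩
    · exact glb_generic huv hx hy hxu (iSpar_not_iSupSet hypar)
  · rcases classify huv hy with hyv | huy | hypar
    · refine ⟨y, Or.inr ⟨(mem_iSdown_iff huv).mpr ⟨hy, hyv⟩,
        (mem_iSupSet_iff huv).mpr ⟨hx, hux⟩⟩, ile_refl huv y, fun z _ hz => hz⟩
    · exact glb_up_up huv hx hy hux huy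
    · exact glb_hard huv hpure hx hux hypar
  · rcases classify huv hy with hyv | huy | hypar
    · have hyu : y ∉ iSupSet u v := fun h =>
        hy ⟨((mem_iSupSet_iff huv).mp h).2, hyv⟩
      exact glb_generic huv hx hy (iSpar_not_iSupSet hxpar) hyu
    · exact glb_swap (glb_hard huv hpure hy huy hxpar)
    · exact glb_generic huv hx hy (iSpar_not_iSupSet hxpar) (iSpar_not_iSupSet hypar)

end Helpers

/-- For a finite lattice `L` and an interval `S = [u,v]`, the factor set
`(L/θ_S, ≤_θ)` is a lattice iff `S` is pure (i.e. not nested). -/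
theorem latticeGenerating_iff_pure {L : Type*} [Lattice L] [Finite L] (u v : L) (huv : u ≤ v) :
    (Reflexive (iLeQ u v) ∧ Transitive (iLeQ u v) ∧
      (∀ a b : Quotient (irelSetoid u v), iLeQ u v a b → iLeQ u v b a → a = b) ∧
      (∀ a b : Quotient (irelSetoid u v), ∃ c, iLeQ u v a c ∧ iLeQ u v b c ∧
        ∀ d, iLeQ u v a d → iLeQ u v b d → iLeQ u v c d) ∧
      (∀ a b : Quotient (irelSetoid u v), ∃ c, iLeQ u v c a ∧ iLeQ u v c b ∧
        ∀ d, iLeQ u v d a → iLeQ u v d b → iLeQ u v d c)) ↔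
    ¬ iNested u v := by
  constructor
  · rintro ⟨_, _, _, hsup, _⟩ ⟨x, y, a, w, hx, hy, ha, hw, hyxw, hxya, hya, hwx⟩
    -- derive a contradiction from a nested configuration
    have hxn : x ∉ Set.Icc u v := hx.1
    have hyn : y ∉ Set.Icc u v := hy.1
    have han : a ∉ Set.Icc u v := ha.1
    have hwn : w ∉ Set.Icc u v := hw.1
    obtain ⟨c, hc1, hc2, hc3⟩ := hsup (Quotient.mk (irelSetoid u v) x)
      (Quotient.mk (irelSetoid u v) w)
    have ixy : ile u v x y := by
      left; rw [ilow_of_not_mem hxn, ihigh_of_not_mem hyn, hyxw]; exact le_sup_left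
    have iwy : ile u v w y := by
      left; rw [ilow_of_not_mem hwn, ihigh_of_not_mem hyn, hyxw]; exact le_sup_right
    have ixa : ile u v x a := by
      left; rw [ilow_of_not_mem hxn, ihigh_of_not_mem han, hxya]; exact inf_le_right
    have iwa : ile u v w a := Or.inr ⟨hw, ha⟩
    have h1 : iLeQ u v c (Quotient.mk (irelSetoid u v) y) :=
      hc3 _ (iLeQ_mk_iff.mpr ixy) (iLeQ_mk_iff.mpr iwy)
    have h2 : iLeQ u v c (Quotient.mk (irelSetoid u v) a) :=
      hc3 _ (iLeQ_mk_iff.mpr ixa) (iLeQ_mk_iff.mpr iwa)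
    obtain ⟨z, rfl⟩ := Quotient.exists_rep c
    have hxz := iLeQ_mk_iff.mp hc1
    have hwz := iLeQ_mk_iff.mp hc2
    have hzy := iLeQ_mk_iff.mp h1
    have hza := iLeQ_mk_iff.mp h2
    have hzn : z ∉ Set.Icc u v := by
      intro hz
      rcases hzy with h | ⟨hd, _⟩
      · rw [ilow_of_mem hz, ihigh_of_not_mem hyn] at h
        exact iSpar_not_ge hy ⟨le_rfl, huv⟩ h
      · exact hd.1 hz
    have hzley : z ≤ y := by
      rcases hzy with h | ⟨_, hu⟩
      · rwa [ilow_of_not_mem hzn, ihigh_of_not_mem hyn] at h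
      · exact absurd hu (iSpar_not_iSupSet hy)
    have hxlez : x ≤ z := by
      rcases hxz with h | ⟨hd, _⟩
      · rwa [ilow_of_not_mem hxn, ihigh_of_not_mem hzn] at h
      · exact absurd hd (iSpar_not_iSdown hx)
    have hwlez : w ≤ z := by
      rcases hwz with h | ⟨_, hu⟩
      · rwa [ilow_of_not_mem hwn, ihigh_of_not_mem hzn] at h
      · exact absurd (((mem_iSupSet_iff huv).mp hu).2.trans hzley)
          (iSpar_not_ge hy ⟨le_rfl, huv⟩)
    have hzy' : z = y := le_antisymm hzley (hyxw ▸ sup_le hxlez hwlez)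
    subst hzy'
    rcases hza with h | ⟨hd, _⟩
    · rw [ilow_of_not_mem hzn, ihigh_of_not_mem han] at h
      exact hya h
    · exact iSpar_not_iSdown hy hd
  · intro hpure
    refine ⟨?_, ?_, ?_, ?_, ?_⟩
    · intro c
      obtain ⟨z, rfl⟩ := Quotient.exists_rep c
      exact iLeQ_mk_iff.mpr (ile_refl huv z)
    · intro c1 c2 c3 h1 h2
      obtain ⟨z1, rfl⟩ := Quotient.exists_rep c1
      obtain ⟨z2, rfl⟩ := Quotient.exists_rep c2
      obtain ⟨z3, rfl⟩ := Quotient.exists_rep c3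
      exact iLeQ_mk_iff.mpr (ile_trans huv (iLeQ_mk_iff.mp h1) (iLeQ_mk_iff.mp h2))
    · intro c1 c2 h1 h2
      obtain ⟨z1, rfl⟩ := Quotient.exists_rep c1
      obtain ⟨z2, rfl⟩ := Quotient.exists_rep c2
      exact Quotient.sound (ile_antisymm huv (iLeQ_mk_iff.mp h1) (iLeQ_mk_iff.mp h2))
    · intro c1 c2
      obtain ⟨z1, rfl⟩ := Quotient.exists_rep c1
      obtain ⟨z2, rfl⟩ := Quotient.exists_rep c2
      obtain ⟨j, h1, h2, h3⟩ := exists_ile_lub huv hpure z1 z2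
      refine ⟨Quotient.mk (irelSetoid u v) j, iLeQ_mk_iff.mpr h1, iLeQ_mk_iff.mpr h2, ?_⟩
      intro d hd1 hd2
      obtain ⟨z, rfl⟩ := Quotient.exists_rep d
      exact iLeQ_mk_iff.mpr (h3 z (iLeQ_mk_iff.mp hd1) (iLeQ_mk_iff.mp hd2))
    · intro c1 c2
      obtain ⟨z1, rfl⟩ := Quotient.exists_rep c1
      obtain ⟨z2, rfl⟩ := Quotient.exists_rep c2
      obtain ⟨m, h1, h2, h3⟩ := exists_ile_glb huv hpure z1 z2
      refine ⟨Quotient.mk (irelSetoid u v) m, iLeQ_mk_iff.mpr h1, iLeQ_mk_iff.mpr h2, ?_⟩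
      intro d hd1 hd2
      obtain ⟨z, rfl⟩ := Quotient.exists_rep d
      exact iLeQ_mk_iff.mpr (h3 z (iLeQ_mk_iff.mp hd1) (iLeQ_mk_iff.mp hd2))
end
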